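/- arXiv:2003.03791 — 7 statements merged into one kernel-verified Lean document; each statement's English description precedes it below -/
import Mathlib

section
/- Let G be a finite simple graph on n ≥ 1 vertices and let k ≥ 1 be an integer. Then c_T^∞(G) ≤ k if and only if c(G) ≤ k, where T = n·C(n+k−1, k) (with C denoting the binomial coefficient). -/
open SimpleGraph

/-- `c'` is a one-step move of the `k` cops from configuration `c` in `G`:
each cop stays put or moves to an adjacent vertex. -/
def OneStepMove {V : Type*} (G : SimpleGraph V) {k : ℕ} (c c' : Fin k → V) : Prop :=
  ∀ i, c' i = c i ∨ G.Adj (c i) (c' i)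

/-- The capture predicate `Cap G T s c r`: from cop configuration `c`, with the robber at `r`,
the cops can capture the robber within `s` time-steps, ending in a configuration in `T`. -/
def Cap {V : Type*} (G : SimpleGraph V) {k : ℕ} (T : Set (Fin k → V)) :
    ℕ → (Fin k → V) → V → Prop
  | 0, _, _ => False
  | s + 1, c, r => ∃ c', OneStepMove G c c' ∧
      (((∃ i, c' i = r) ∧ c' ∈ T) ∨
        ∀ r', (r' = r ∨ G.Adj r r') →
          (((∃ i, c' i = r') ∧ c' ∈ T) ∨ Cap G T s c' r'))

/-- `k` cops can win a single play on `G` within `t` time-steps. -/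
def TimedWin {V : Type*} (G : SimpleGraph V) (k t : ℕ) : Prop :=
  ∃ c : Fin k → V, ∀ r : V,
    (∃ i, c i = r) ∨ Cap G (Set.univ : Set (Fin k → V)) t c r

/-- The `t`-capture cop number `c_t(G)`. -/
noncomputable def captureCopNumber {V : Type*} (G : SimpleGraph V) (t : ℕ) : ℕ :=
  sInf {k | 1 ≤ k ∧ TimedWin G k t}

/-- `k` cops can win the eternal game on `G`, capturing each robber within `t` time-steps. -/
def EternalWin {V : Type*} (G : SimpleGraph V) (k t : ℕ) : Prop :=
  ∃ T : Set (Fin k → V), T.Nonempty ∧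
    ∀ c ∈ T, ∀ r : V, (∃ i, c i = r) ∨ Cap G T t c r

/-- The eternal cop number `c_t^∞(G)`. -/
noncomputable def eternalCopNumber {V : Type*} (G : SimpleGraph V) (t : ℕ) : ℕ :=
  sInf {k | 1 ≤ k ∧ EternalWin G k t}

/-- The cop number `c(G)`. -/
noncomputable def copNumber {V : Type*} (G : SimpleGraph V) : ℕ :=
  sInf {k | ∃ t, 1 ≤ t ∧ captureCopNumber G t ≤ k}

/-- `ℓ_i = ⌈(1 - 2^{-i}) t - 1/2⌉`. -/
def ell (t i : ℕ) : ℕ :=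
  (⌈((1 : ℚ) - 2 ^ (-(i : ℤ))) * (t : ℚ) - 1 / 2⌉).toNat

/-- The subgraph of `G` induced by `W` is a retract of `G`. -/
def IsRetract {V : Type*} (G : SimpleGraph V) (W : Set V) : Prop :=
  ∃ f : V → V, (∀ v, f v ∈ W) ∧ (∀ w ∈ W, f w = w) ∧
    ∀ u v, G.Adj u v → f u = f v ∨ G.Adj (f u) (f v)

/-- The radius of a graph. -/
noncomputable def graphRadius {V : Type*} (G : SimpleGraph V) : ℕ :=
  sInf {r | ∃ v, ∀ u, G.dist v u ≤ r}

/-!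
Let `M = n·C(n+k−1,k)`, the number of pairs (multiset of `k` cop positions, robber position).
Being caught within `s` steps is monotone in `s`, invariant under permuting the cops, and its
stage `s + 1` is determined by stage `s`; so it stabilises by stage `M`.
Given a winning start for `k` cops in some timed game, let `W` be the configurations from which
every robber is caught within `M` steps. From a move `c'` of some `c ∈ W` the cops can step back
to `c`, so they catch every robber within `M + 1`, hence by stability within `M`, steps: `W` is
closed under moves and is therefore an eternal strategy.
-/

lemma Equiv.Perm.exists_comp_eq_of_map_univ_eq {ι α : Type*} [Fintype ι] {c c' : ι → α}
    (h : Finset.univ.val.map c = Finset.univ.val.map c') :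
    ∃ σ : Equiv.Perm ι, c ∘ σ = c' := by
  classical
  have hfiber : ∀ v, Fintype.card {i // c' i = v} = Fintype.card {i // c i = v} := by
    intro v
    have := congrArg (Multiset.count v) h
    simp only [Multiset.count_map] at this
    simp only [Fintype.card_subtype, Finset.card, Finset.filter_val, eq_comm (b := v)]
    exact this.symm
  exact ⟨Equiv.ofFiberEquiv fun v => Fintype.equivOfCardEq (hfiber v),
    funext (Equiv.ofFiberEquiv_map _)⟩

lemma exists_le_card_forall_succ_imp {α β : Type*} [Fintype β] (f : α → β)
    (P : ℕ → α → Prop) (hP : ∀ s x, P s x → P (s + 1) x)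
    (hf : ∀ s x y, f x = f y → P s x → P s y) :
    ∃ s ≤ Fintype.card β, ∀ x, P (s + 1) x → P s x := by
  classical
  by_contra! hgrow
  let S : ℕ → Finset β := fun s => Finset.univ.filter fun b => ∃ x, f x = b ∧ P s x
  have hsub : ∀ s, S s ⊆ S (s + 1) := by
    intro s b hb
    simp only [S, Finset.mem_filter_univ] at hb ⊢
    obtain ⟨y, rfl, hy⟩ := hb
    exact ⟨y, rfl, hP s y hy⟩
  have hssub : ∀ s ≤ Fintype.card β, S s ⊂ S (s + 1) := by
    intro s hs
    obtain ⟨x, hx, hnx⟩ := hgrow s hs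
    refine (Finset.ssubset_iff_of_subset (hsub s)).mpr ⟨f x, ?_, ?_⟩
    · simp only [S, Finset.mem_filter_univ]
      exact ⟨x, rfl, hx⟩
    · simp only [S, Finset.mem_filter_univ, not_exists, not_and]
      exact fun y hyx hy => hnx (hf s y x hyx hy)
  have hcard : ∀ s ≤ Fintype.card β + 1, s ≤ (S s).card := by
    intro s
    induction s with
    | zero => exact fun _ => Nat.zero_le _
    | succ s ih =>
      intro hs
      have := Finset.card_lt_card (hssub s (by omega))
      have := ih (by omega)
      omega
  have := (hcard _ le_rfl).trans (Finset.card_le_univ _)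
  omega

lemma Nat.choose_add_sub_one_le {n a b : ℕ} (hn : 1 ≤ n) (hab : a ≤ b) :
    (n + a - 1).choose a ≤ (n + b - 1).choose b := by
  obtain ⟨m, rfl⟩ := Nat.exists_eq_add_of_le' hn
  rw [show m + 1 + a - 1 = m + a by omega, show m + 1 + b - 1 = m + b by omega,
    ← Nat.choose_symm_add, ← Nat.choose_symm_add]
  exact Nat.choose_le_choose m (by omega)

section CopsAndRobber

variable {V : Type*} (G : SimpleGraph V) {k : ℕ}

lemma OneStepMove.symm {c c' : Fin k → V} (h : OneStepMove G c c') : OneStepMove G c' c :=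
  fun i => (h i).imp Eq.symm fun hadj => hadj.symm

lemma Cap.mono_set {T T' : Set (Fin k → V)} (hT : T ⊆ T') :
    ∀ {s : ℕ} {c : Fin k → V} {r : V}, Cap G T s c r → Cap G T' s c r
  | 0, _, _, h => h.elim
  | _ + 1, _, _, ⟨c', hmove, hcap⟩ => ⟨c', hmove, hcap.imp (And.imp_right (@hT _))
      fun hall r' hr' => (hall r' hr').imp (And.imp_right (@hT _)) (Cap.mono_set hT)⟩

lemma Cap.succ {T : Set (Fin k → V)} :
    ∀ {s : ℕ} {c : Fin k → V} {r : V}, Cap G T s c r → Cap G T (s + 1) c r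
  | 0, _, _, h => h.elim
  | _ + 1, _, _, ⟨c', hmove, hcap⟩ =>
      ⟨c', hmove, hcap.imp id fun hall r' hr' => (hall r' hr').imp id Cap.succ⟩

lemma Cap.mono {T : Set (Fin k → V)} {s s' : ℕ} (hs : s ≤ s') {c : Fin k → V} {r : V}
    (h : Cap G T s c r) : Cap G T s' c r := by
  induction s', hs using Nat.le_induction with
  | base => exact h
  | succ s' _ ih => exact Cap.succ G ih

lemma Cap.comp_perm (σ : Equiv.Perm (Fin k)) :
    ∀ {s : ℕ} {c : Fin k → V} {r : V}, Cap G Set.univ s c r → Cap G Set.univ s (c ∘ σ) r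
  | 0, _, _, h => h.elim
  | _ + 1, _, _, ⟨c', hmove, hcap⟩ => by
      have hcaught : ∀ {v}, (∃ i, c' i = v) → ∃ i, (c' ∘ σ) i = v :=
        fun ⟨i, hi⟩ => ⟨σ.symm i, by simpa using hi⟩
      exact ⟨c' ∘ σ, fun i => hmove (σ i), hcap.imp (And.imp_left hcaught)
        fun hall r' hr' => (hall r' hr').imp (And.imp_left hcaught) (Cap.comp_perm σ)⟩

lemma Cap.of_univ {W : Set (Fin k → V)}
    (hW : ∀ c ∈ W, ∀ c', OneStepMove G c c' → c' ∈ W) :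
    ∀ {s : ℕ} {c : Fin k → V} {r : V}, c ∈ W → Cap G Set.univ s c r → Cap G W s c r
  | 0, _, _, _, h => h.elim
  | _ + 1, c, _, hc, ⟨c', hmove, hcap⟩ => by
      have hc' := hW c hc c' hmove
      exact ⟨c', hmove, hcap.imp (fun h => ⟨h.1, hc'⟩)
        fun hall r' hr' => (hall r' hr').imp (fun h => ⟨h.1, hc'⟩) (Cap.of_univ hW hc')⟩

def CatchesWithin (s : ℕ) (c : Fin k → V) (r : V) : Prop :=
  (∃ i, c i = r) ∨ Cap G Set.univ s c r

lemma cap_univ_succ_iff {s : ℕ} {c : Fin k → V} {r : V} :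
    Cap G Set.univ (s + 1) c r ↔ ∃ c', OneStepMove G c c' ∧
      ((∃ i, c' i = r) ∨ ∀ r', (r' = r ∨ G.Adj r r') → CatchesWithin G s c' r') := by
  simp only [Cap, Set.mem_univ, and_true, CatchesWithin]

lemma CatchesWithin.mono {s s' : ℕ} (hs : s ≤ s') {c : Fin k → V} {r : V}
    (h : CatchesWithin G s c r) : CatchesWithin G s' c r :=
  h.imp id (Cap.mono G hs)

lemma CatchesWithin.comp_perm (σ : Equiv.Perm (Fin k)) {s : ℕ} {c : Fin k → V} {r : V}
    (h : CatchesWithin G s c r) : CatchesWithin G s (c ∘ σ) r :=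
  h.imp (fun ⟨i, hi⟩ => ⟨σ.symm i, by simpa using hi⟩) (Cap.comp_perm G σ)

lemma CatchesWithin.succ_of_imp {s s' : ℕ}
    (h : ∀ (c : Fin k → V) r, CatchesWithin G s c r → CatchesWithin G s' c r)
    {c : Fin k → V} {r : V} :
    CatchesWithin G (s + 1) c r → CatchesWithin G (s' + 1) c r := by
  refine Or.imp id fun hcap => ?_
  obtain ⟨c', hmove, hcap⟩ := (cap_univ_succ_iff G).mp hcap
  exact (cap_univ_succ_iff G).mpr
    ⟨c', hmove, hcap.imp id fun hall r' hr' => h c' r' (hall r' hr')⟩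

lemma CatchesWithin.of_stable {s₀ : ℕ}
    (hs₀ : ∀ (c : Fin k → V) r, CatchesWithin G (s₀ + 1) c r → CatchesWithin G s₀ c r) :
    ∀ (s : ℕ) (c : Fin k → V) (r : V), CatchesWithin G s c r → CatchesWithin G s₀ c r
  | 0, _, _, h => h.mono G (Nat.zero_le _)
  | s + 1, c, r, h => hs₀ c r (h.succ_of_imp G (CatchesWithin.of_stable hs₀ s))

lemma exists_stable_catchesWithin [Fintype V] :
    ∃ s₀ ≤ Fintype.card V * (Fintype.card V + k - 1).choose k,
      ∀ (c : Fin k → V) r, CatchesWithin G (s₀ + 1) c r → CatchesWithin G s₀ c r := by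
  classical
  let key : (Fin k → V) × V → Sym V k × V :=
    fun p => (⟨Finset.univ.val.map p.1, by simp⟩, p.2)
  obtain ⟨s₀, hs₀, hstable⟩ := exists_le_card_forall_succ_imp key
    (fun s p => CatchesWithin G s p.1 p.2) (fun s _ h => h.mono G (Nat.le_succ s))
    (by
      rintro s ⟨c, r⟩ ⟨c', r'⟩ hkey h
      obtain ⟨hc, rfl⟩ := Prod.mk.inj hkey
      obtain ⟨σ, rfl⟩ :=
        Equiv.Perm.exists_comp_eq_of_map_univ_eq (c := c) (c' := c') (congrArg Subtype.val hc)
      exact h.comp_perm G σ)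
  refine ⟨s₀, ?_, fun c r => hstable (c, r)⟩
  rwa [Fintype.card_prod, Sym.card_sym_eq_choose, mul_comm] at hs₀

theorem eternalWin_of_timedWin [Fintype V] {t : ℕ} (h : TimedWin G k t) :
    EternalWin G k (Fintype.card V * (Fintype.card V + k - 1).choose k) := by
  set M := Fintype.card V * (Fintype.card V + k - 1).choose k
  obtain ⟨s₀, hs₀M, hs₀⟩ := exists_stable_catchesWithin G (k := k)
  have hcatch : ∀ s c r, CatchesWithin G s c r → CatchesWithin G M c r :=
    fun s c r h => (CatchesWithin.of_stable G hs₀ s c r h).mono G hs₀M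
  let W : Set (Fin k → V) := {c | ∀ r, CatchesWithin G M c r}
  have hW : ∀ c ∈ W, ∀ c', OneStepMove G c c' → c' ∈ W := fun c hc c' hmove r =>
    hcatch (M + 1) c' r <| Or.inr <| (cap_univ_succ_iff G).mpr
      ⟨c, hmove.symm, Or.inr fun r' _ => hc r'⟩
  obtain ⟨c₀, hc₀⟩ := h
  exact ⟨W, ⟨c₀, fun r => hcatch t c₀ r (hc₀ r)⟩,
    fun c hc r => (hc r).imp id (Cap.of_univ G hW hc)⟩

lemma EternalWin.mono {t t' : ℕ} (ht : t ≤ t') (h : EternalWin G k t) : EternalWin G k t' :=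
  let ⟨T, hT, hwin⟩ := h
  ⟨T, hT, fun c hc r => (hwin c hc r).imp id (Cap.mono G ht)⟩

lemma EternalWin.timedWin {t : ℕ} (h : EternalWin G k t) : TimedWin G k t :=
  let ⟨_, ⟨c, hc⟩, hwin⟩ := h
  ⟨c, fun r => (hwin c hc r).imp id (Cap.mono_set G (Set.subset_univ _))⟩

lemma eternalWin_card [Fintype V] (t : ℕ) : EternalWin G (Fintype.card V) t :=
  ⟨{⇑(Fintype.equivFin V).symm}, Set.singleton_nonempty _, by
    rintro c rfl r
    exact Or.inl ⟨Fintype.equivFin V r, by simp⟩⟩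

lemma captureCopNumber_le {t : ℕ} (hk : 1 ≤ k) (h : TimedWin G k t) :
    captureCopNumber G t ≤ k :=
  Nat.sInf_le (s := {k | 1 ≤ k ∧ TimedWin G k t}) ⟨hk, h⟩

lemma eternalCopNumber_le {t : ℕ} (hk : 1 ≤ k) (h : EternalWin G k t) :
    eternalCopNumber G t ≤ k :=
  Nat.sInf_le (s := {k | 1 ≤ k ∧ EternalWin G k t}) ⟨hk, h⟩

lemma copNumber_le_captureCopNumber {t : ℕ} (ht : 1 ≤ t) :
    copNumber G ≤ captureCopNumber G t :=
  Nat.sInf_le (s := {k | ∃ t, 1 ≤ t ∧ captureCopNumber G t ≤ k}) ⟨t, ht, le_rfl⟩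

lemma captureCopNumber_spec [Fintype V] [Nonempty V] (t : ℕ) :
    1 ≤ captureCopNumber G t ∧ TimedWin G (captureCopNumber G t) t :=
  Nat.sInf_mem (s := {k | 1 ≤ k ∧ TimedWin G k t})
    ⟨_, Fintype.card_pos, (eternalWin_card G t).timedWin⟩

lemma eternalCopNumber_spec [Fintype V] [Nonempty V] (t : ℕ) :
    1 ≤ eternalCopNumber G t ∧ EternalWin G (eternalCopNumber G t) t :=
  Nat.sInf_mem (s := {k | 1 ≤ k ∧ EternalWin G k t})
    ⟨_, Fintype.card_pos, eternalWin_card G t⟩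

lemma exists_captureCopNumber_le_copNumber [Fintype V] [Nonempty V] :
    ∃ t, 1 ≤ t ∧ captureCopNumber G t ≤ copNumber G :=
  Nat.sInf_mem (s := {k | ∃ t, 1 ≤ t ∧ captureCopNumber G t ≤ k})
    ⟨_, 1, le_rfl, captureCopNumber_le G Fintype.card_pos (eternalWin_card G 1).timedWin⟩

end CopsAndRobber

theorem eternalCopNumber_le_iff_copNumber_le_general {V : Type*} [Fintype V] (G : SimpleGraph V)
    (n : ℕ) (hn : n = Fintype.card V) (hn1 : 1 ≤ n) (k : ℕ) :
    eternalCopNumber G (n * (n + k - 1).choose k) ≤ k ↔ copNumber G ≤ k := by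
  subst hn
  have : Nonempty V := Fintype.card_pos_iff.mp hn1
  set M := Fintype.card V * (Fintype.card V + k - 1).choose k
  constructor
  · intro h
    obtain ⟨hpos, hwin⟩ := eternalCopNumber_spec G M
    calc copNumber G ≤ captureCopNumber G M :=
          copNumber_le_captureCopNumber G (Nat.mul_pos hn1 (Nat.choose_pos (by omega)))
      _ ≤ eternalCopNumber G M := captureCopNumber_le G hpos hwin.timedWin
      _ ≤ k := h
  · intro h
    obtain ⟨t, -, htk⟩ := exists_captureCopNumber_le_copNumber G
    obtain ⟨hpos, hwin⟩ := captureCopNumber_spec G t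
    have hM : Fintype.card V * (Fintype.card V + captureCopNumber G t - 1).choose
        (captureCopNumber G t) ≤ M :=
      Nat.mul_le_mul_left _ (Nat.choose_add_sub_one_le hn1 (htk.trans h))
    calc eternalCopNumber G M ≤ captureCopNumber G t :=
          eternalCopNumber_le G hpos ((eternalWin_of_timedWin G hwin).mono G hM)
      _ ≤ copNumber G := htk
      _ ≤ k := h

/-- With `T = n·C(n+k−1,k)`, `c_T^∞(G) ≤ k` iff `c(G) ≤ k`. -/
theorem eternalCopNumber_le_iff_copNumber_le {V : Type*} [Fintype V] (G : SimpleGraph V)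
    (n : ℕ) (hn : n = Fintype.card V) (hn1 : 1 ≤ n) (k : ℕ) (hk : 1 ≤ k) :
    eternalCopNumber G (n * (n + k - 1).choose k) ≤ k ↔ copNumber G ≤ k :=
  eternalCopNumber_le_iff_copNumber_le_general G n hn hn1 k
end

section
/- For every positive integer t, every sum-decreasing sequence of positive integers whose first term is t has length at most ⌊log₂ t⌋ + 1, and there exists a sum-decreasing sequence of positive integers with first term t whose length is exactly ⌊log₂ t⌋ + 1. -/
/-! Every term of a sum-decreasing list exceeds the sum of the later ones, so by induction a
sum-decreasing list of length `n` has sum at least `2 ^ n - 1`; hence a first term `t` followed by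
`n` more terms satisfies `2 ^ n ≤ t`. Conversely `t, 2 ^ (k - 1), …, 2, 1` with `k = ⌊log₂ t⌋` is
sum-decreasing, since the powers sum to `2 ^ k - 1 < 2 ^ k ≤ t`. -/

open SimpleGraph

/-- A finite sequence is sum-decreasing if every term is strictly greater
than the sum of all terms that come after it. -/
def SumDecreasing (l : List ℕ) : Prop :=
  ∀ i : Fin l.length, (l.drop (i + 1)).sum < l.get i

theorem sumDecreasing_nil : SumDecreasing [] := fun i => i.elim0

theorem sumDecreasing_cons {a : ℕ} {l : List ℕ} :
    SumDecreasing (a :: l) ↔ l.sum < a ∧ SumDecreasing l := by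
  simp [SumDecreasing, Fin.forall_fin_succ]

namespace SumDecreasing

theorem pos {l : List ℕ} (h : SumDecreasing l) : ∀ x ∈ l, 0 < x := by
  induction l with
  | nil => simp
  | cons a l ih =>
    obtain ⟨hlt, htail⟩ := sumDecreasing_cons.1 h
    exact List.forall_mem_cons.2 ⟨Nat.zero_lt_of_lt hlt, ih htail⟩

theorem two_pow_length_le_sum_add_one {l : List ℕ} (h : SumDecreasing l) :
    2 ^ l.length ≤ l.sum + 1 := by
  induction l with
  | nil => simp
  | cons a l ih =>
    obtain ⟨hlt, htail⟩ := sumDecreasing_cons.1 h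
    have := ih htail
    simp only [List.length_cons, List.sum_cons, pow_succ]
    omega

theorem two_pow_length_tail_le_head {a : ℕ} {l : List ℕ} (h : SumDecreasing (a :: l)) :
    2 ^ l.length ≤ a := by
  obtain ⟨hlt, htail⟩ := sumDecreasing_cons.1 h
  have := htail.two_pow_length_le_sum_add_one
  omega

theorem length_le_log_head_add_one {a : ℕ} {l : List ℕ} (h : SumDecreasing (a :: l)) :
    (a :: l).length ≤ Nat.log 2 a + 1 :=
  Nat.succ_le_succ (Nat.le_log_of_pow_le one_lt_two h.two_pow_length_tail_le_head)

end SumDecreasing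

def descTwoPows : ℕ → List ℕ
  | 0 => []
  | k + 1 => 2 ^ k :: descTwoPows k

theorem length_descTwoPows (k : ℕ) : (descTwoPows k).length = k := by
  induction k <;> simp [descTwoPows, *]

theorem sum_descTwoPows_add_one (k : ℕ) : (descTwoPows k).sum + 1 = 2 ^ k := by
  induction k with
  | zero => rfl
  | succ k ih => simp only [descTwoPows, List.sum_cons, pow_succ]; omega

theorem sumDecreasing_descTwoPows (k : ℕ) : SumDecreasing (descTwoPows k) := by
  induction k with
  | zero => exact sumDecreasing_nil
  | succ k ih =>
    refine sumDecreasing_cons.2 ⟨?_, ih⟩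
    have := sum_descTwoPows_add_one k
    omega

/-- the maximum length of a sum-decreasing sequence of positive integers
with first term `t` is exactly `⌊log₂ t⌋ + 1`. -/
theorem maxseq_eq_log_add_one (t : ℕ) (ht : 1 ≤ t) :
    (∀ l : List ℕ, (∀ x ∈ l, 0 < x) → SumDecreasing l → l.head? = some t →
      l.length ≤ Nat.log 2 t + 1) ∧
    (∃ l : List ℕ, (∀ x ∈ l, 0 < x) ∧ SumDecreasing l ∧ l.head? = some t ∧
      l.length = Nat.log 2 t + 1) := by
  constructor
  · rintro (_ | ⟨a, l⟩) - h hhead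
    · simp at hhead
    · obtain rfl : a = t := by simpa using hhead
      exact h.length_le_log_head_add_one
  · have hsd : SumDecreasing (t :: descTwoPows (Nat.log 2 t)) := by
      refine sumDecreasing_cons.2 ⟨?_, sumDecreasing_descTwoPows _⟩
      have := sum_descTwoPows_add_one (Nat.log 2 t)
      have := Nat.pow_log_le_self 2 (Nat.one_le_iff_ne_zero.1 ht)
      omega
    exact ⟨_, hsd.pos, hsd, rfl, by simp [length_descTwoPows]⟩
end

section
/- For all integers t ≥ 1 and n ≥ 1, the eternal cop number of the path on n vertices satisfies c_t^∞(P_n) = ⌈n/(t+1)⌉. -/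
open SimpleGraph

lemma path_adj_val {n : ℕ} {u v : Fin n} (h : (pathGraph n).Adj u v) :
    u.val + 1 = v.val ∨ v.val + 1 = u.val := (pathGraph_adj).1 h

lemma path_adj_of_val {n : ℕ} {u v : Fin n} (h : u.val + 1 = v.val ∨ v.val + 1 = u.val) :
    (pathGraph n).Adj u v := pathGraph_adj.2 h

/-- The invariant set: cop `i` stays in its block `[i(t+1), min(i(t+1)+t, n-1)]`. -/
def Tset (t n k : ℕ) : Set (Fin k → Fin n) :=
  {c | ∀ i : Fin k, i.val * (t + 1) ≤ (c i).val ∧ (c i).val ≤ min (i.val * (t + 1) + t) (n - 1)}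

lemma chase (t n k : ℕ) :
    ∀ (s : ℕ) (c : Fin k → Fin n) (r : Fin n) (m : ℕ),
      c ∈ Tset t n k →
      (m = 0 ∨ ∃ a : Fin k, (c a).val + 1 ≤ m ∧ m ≤ (c a).val + 1 + s ∧ (c a).val < r.val ∧
        m ≤ min (a.val * (t + 1) + t) (n - 1) + 1) →
      (m = n ∨ ∃ b : Fin k, m ≤ (c b).val ∧ (c b).val ≤ m + s ∧ r.val < (c b).val ∧
        b.val * (t + 1) ≤ m) →
      Cap (pathGraph n) (Tset t n k) s c r := by
  intro s
  induction s with
  | zero =>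
    intro c r m _ hL hR
    exfalso
    have hrn := r.isLt
    rcases hL with hm0 | ⟨a, h1, h2, h3, _⟩ <;>
      rcases hR with hmn | ⟨b, g1, g2, g3, _⟩ <;> omega
  | succ s ih =>
    intro c r m hcT hL hR
    have hrn := r.isLt
    rcases hL with hm0 | ⟨a, hxa1, hxa2, hxar, hxaB⟩
    · rcases hR with hmn | ⟨b, hyb1, hyb2, hybr, hybB⟩
      · omega
      · -- left virtual (m = 0), right chaser b
        set y := (c b).val with hy
        have hyn := (c b).isLt
        have hnylt : y - 1 < n := by omega
        set c' : Fin k → Fin n := Function.update c b ⟨y - 1, hnylt⟩ with hc'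
        have hc'b : (c' b).val = y - 1 := by simp [hc']
        have hc'other : ∀ i, i ≠ b → c' i = c i := by
          intro i hi; simp [hc', Function.update_of_ne hi]
        have hmove : OneStepMove (pathGraph n) c c' := by
          intro i
          by_cases hib : i = b
          · rw [hib]
            right; exact path_adj_of_val (Or.inr (by rw [hc'b]; omega))
          · left; exact hc'other i hib
        have hT' : c' ∈ Tset t n k := by
          intro i
          by_cases hib : i = b
          · rw [hib]
            have := hcT b
            exact ⟨by rw [hc'b]; omega, by rw [hc'b]; omega⟩
          · rw [hc'other i hib]; exact hcT i
        refine ⟨c', hmove, ?_⟩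
        by_cases hcap : y - 1 = r.val
        · exact Or.inl ⟨⟨b, Fin.ext (by rw [hc'b, hcap])⟩, hT'⟩
        · right
          intro r' hr'
          have hr'val : r'.val + 1 = r.val ∨ r'.val = r.val ∨ r.val + 1 = r'.val := by
            rcases hr' with rfl | hadj
            · right; left; rfl
            · rcases path_adj_val hadj with h | h
              · right; right; exact h
              · left; exact h
          by_cases hcap' : r'.val = y - 1
          · exact Or.inl ⟨⟨b, Fin.ext (by rw [hc'b, hcap'])⟩, hT'⟩
          · right
            apply ih c' r' m hT' (Or.inl hm0)
            right
            exact ⟨b, by rw [hc'b]; omega, by rw [hc'b]; omega,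
              by rw [hc'b]; omega, by omega⟩
    · rcases hR with hmn | ⟨b, hyb1, hyb2, hybr, hybB⟩
      · -- right virtual (m = n), left chaser a
        set x := (c a).val with hx
        have hnxlt : x + 1 < n := by omega
        set c' : Fin k → Fin n := Function.update c a ⟨x + 1, hnxlt⟩ with hc'
        have hc'a : (c' a).val = x + 1 := by simp [hc']
        have hc'other : ∀ i, i ≠ a → c' i = c i := by
          intro i hi; simp [hc', Function.update_of_ne hi]
        have hmove : OneStepMove (pathGraph n) c c' := by
          intro i
          by_cases hia : i = a
          · rw [hia]
            right; exact path_adj_of_val (Or.inl (by rw [hc'a]))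
          · left; exact hc'other i hia
        have hT' : c' ∈ Tset t n k := by
          intro i
          by_cases hia : i = a
          · rw [hia]
            have := hcT a
            exact ⟨by rw [hc'a]; omega, by rw [hc'a]; omega⟩
          · rw [hc'other i hia]; exact hcT i
        refine ⟨c', hmove, ?_⟩
        by_cases hcap : x + 1 = r.val
        · exact Or.inl ⟨⟨a, Fin.ext (by rw [hc'a, hcap])⟩, hT'⟩
        · right
          intro r' hr'
          have hr'val : r'.val + 1 = r.val ∨ r'.val = r.val ∨ r.val + 1 = r'.val := by
            rcases hr' with rfl | hadj
            · right; left; rfl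
            · rcases path_adj_val hadj with h | h
              · right; right; exact h
              · left; exact h
          by_cases hcap' : r'.val = x + 1
          · exact Or.inl ⟨⟨a, Fin.ext (by rw [hc'a, hcap'])⟩, hT'⟩
          · right
            have hr'n := r'.isLt
            apply ih c' r' m hT' ?_ (Or.inl hmn)
            right
            exact ⟨a, by rw [hc'a]; omega, by rw [hc'a]; omega,
              by rw [hc'a]; omega, hxaB⟩
      · -- both chasers real
        have hab : a ≠ b := by
          intro h; rw [h] at hxar; omega
        set x := (c a).val with hx
        set y := (c b).val with hy
        have hyn := (c b).isLt
        set nx := min (x + 1) (m - 1) with hnx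
        set ny := max (y - 1) m with hny
        have hnxlt : nx < n := by omega
        have hnylt : ny < n := by omega
        set c' : Fin k → Fin n :=
          Function.update (Function.update c a ⟨nx, hnxlt⟩) b ⟨ny, hnylt⟩ with hc'
        have hc'a : (c' a).val = nx := by
          simp [hc', Function.update_of_ne hab]
        have hc'b : (c' b).val = ny := by simp [hc']
        have hc'other : ∀ i, i ≠ a → i ≠ b → c' i = c i := by
          intro i hia hib
          simp [hc', Function.update_of_ne hib, Function.update_of_ne hia]
        have hmove : OneStepMove (pathGraph n) c c' := by
          intro i
          by_cases hib : i = b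
          · rw [hib]
            by_cases hye : m ≤ y - 1
            · right; exact path_adj_of_val (Or.inr (by rw [hc'b]; omega))
            · left; apply Fin.ext; rw [hc'b]; omega
          · by_cases hia : i = a
            · rw [hia]
              by_cases hxe : x + 1 ≤ m - 1
              · right; exact path_adj_of_val (Or.inl (by rw [hc'a]; omega))
              · left; apply Fin.ext; rw [hc'a]; omega
            · left; exact hc'other i hia hib
        have hT' : c' ∈ Tset t n k := by
          intro i
          by_cases hib : i = b
          · rw [hib]
            have := hcT b
            exact ⟨by rw [hc'b]; omega, by rw [hc'b]; omega⟩
          · by_cases hia : i = a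
            · rw [hia]
              have := hcT a
              exact ⟨by rw [hc'a]; omega, by rw [hc'a]; omega⟩
            · rw [hc'other i hia hib]; exact hcT i
        refine ⟨c', hmove, ?_⟩
        by_cases hcapa : nx = r.val
        · exact Or.inl ⟨⟨a, Fin.ext (by rw [hc'a, hcapa])⟩, hT'⟩
        by_cases hcapb : ny = r.val
        · exact Or.inl ⟨⟨b, Fin.ext (by rw [hc'b, hcapb])⟩, hT'⟩
        right
        intro r' hr'
        have hr'val : r'.val + 1 = r.val ∨ r'.val = r.val ∨ r.val + 1 = r'.val := by
          rcases hr' with rfl | hadj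
          · right; left; rfl
          · rcases path_adj_val hadj with h | h
            · right; right; exact h
            · left; exact h
        by_cases hcap'a : r'.val = nx
        · exact Or.inl ⟨⟨a, Fin.ext (by rw [hc'a, hcap'a])⟩, hT'⟩
        by_cases hcap'b : r'.val = ny
        · exact Or.inl ⟨⟨b, Fin.ext (by rw [hc'b, hcap'b])⟩, hT'⟩
        right
        apply ih c' r' m hT'
        · right
          exact ⟨a, by rw [hc'a]; omega, by rw [hc'a]; omega,
            by rw [hc'a]; omega, hxaB⟩
        · right
          exact ⟨b, by rw [hc'b]; omega, by rw [hc'b]; omega,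
            by rw [hc'b]; omega, by omega⟩


lemma cap_reach {n k : ℕ} {T : Set (Fin k → Fin n)} :
    ∀ (s : ℕ) (c : Fin k → Fin n) (r : Fin n), Cap (pathGraph n) T s c r →
      ∃ c' ∈ T, (∃ i, c' i = r) ∧
        ∀ i, (c i).val ≤ (c' i).val + s ∧ (c' i).val ≤ (c i).val + s := by
  intro s
  induction s with
  | zero => intro c r h; exact absurd h (by simp [Cap])
  | succ s ih =>
    intro c r h
    obtain ⟨c₁, hmove, h⟩ := h
    have hdrift : ∀ i, (c i).val ≤ (c₁ i).val + 1 ∧ (c₁ i).val ≤ (c i).val + 1 := by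
      intro i
      rcases hmove i with he | ha
      · rw [he]; omega
      · rcases path_adj_val ha with h1 | h1 <;> omega
    rcases h with ⟨hcap, hT⟩ | hall
    · exact ⟨c₁, hT, hcap, fun i => by have := hdrift i; omega⟩
    · rcases hall r (Or.inl rfl) with ⟨hcap, hT⟩ | hcap
      · exact ⟨c₁, hT, hcap, fun i => by have := hdrift i; omega⟩
      · obtain ⟨c', hT, hcop, hd⟩ := ih c₁ r hcap
        exact ⟨c', hT, hcop, fun i => by have := hdrift i; have := hd i; omega⟩

lemma eternalWin_lb {n k t : ℕ} (hn : 1 ≤ n) (hw : EternalWin (pathGraph n) k t) :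
    n ≤ k * (t + 1) := by
  by_contra hlt
  push_neg at hlt
  obtain ⟨T, ⟨c₀, hc₀⟩, hT⟩ := hw
  have key : ∀ j, j ≤ k → ∃ c ∈ T,
      j + 1 ≤ (Finset.univ.filter fun i => (c i).val ≤ j * (t + 1)).card := by
    intro j
    induction j with
    | zero =>
      intro _
      have hr0 : (0 : ℕ) < n := hn
      rcases hT c₀ hc₀ ⟨0, hr0⟩ with ⟨i, hi⟩ | hcap
      · refine ⟨c₀, hc₀, ?_⟩
        have : i ∈ Finset.univ.filter fun i => (c₀ i).val ≤ 0 * (t + 1) := by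
          simp [hi]
        exact Finset.card_pos.2 ⟨i, this⟩
      · obtain ⟨c', hT', ⟨i, hi⟩, _⟩ := cap_reach t c₀ ⟨0, hr0⟩ hcap
        refine ⟨c', hT', ?_⟩
        have : i ∈ Finset.univ.filter fun i => (c' i).val ≤ 0 * (t + 1) := by
          simp [hi]
        exact Finset.card_pos.2 ⟨i, this⟩
    | succ j ihj =>
      intro hjk
      obtain ⟨c, hc, hcard⟩ := ihj (by omega)
      have hrval : (j + 1) * (t + 1) < n := by nlinarith
      set r : Fin n := ⟨(j + 1) * (t + 1), hrval⟩ with hr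
      have hfin : ∀ (c' : Fin k → Fin n), c' ∈ T → (∃ i, c' i = r) →
          (∀ i, (c' i).val ≤ (c i).val + t) →
          ∃ c'' ∈ T, j + 2 ≤ (Finset.univ.filter
            fun i => (c'' i).val ≤ (j + 1) * (t + 1)).card := by
        intro c' hc' ⟨i₀, hi₀⟩ hdr
        refine ⟨c', hc', ?_⟩
        have hsub : (Finset.univ.filter fun i => (c i).val ≤ j * (t + 1)) ⊆
            Finset.univ.filter fun i => (c' i).val ≤ (j + 1) * (t + 1) := by
          intro i hi
          simp only [Finset.mem_filter, Finset.mem_univ, true_and] at hi ⊢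
          have := hdr i
          nlinarith
        have hi₀val : (c' i₀).val = (j + 1) * (t + 1) := by rw [hi₀]
        have hnotmem : i₀ ∉ Finset.univ.filter fun i => (c i).val ≤ j * (t + 1) := by
          simp only [Finset.mem_filter, Finset.mem_univ, true_and]
          intro hmem
          have := hdr i₀
          nlinarith
        have hins : insert i₀ (Finset.univ.filter fun i => (c i).val ≤ j * (t + 1)) ⊆
            Finset.univ.filter fun i => (c' i).val ≤ (j + 1) * (t + 1) := by
          intro i hi
          rcases Finset.mem_insert.1 hi with rfl | hi
          · simp [hi₀val]
          · exact hsub hi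
        calc j + 2 ≤ (insert i₀ (Finset.univ.filter
                fun i => (c i).val ≤ j * (t + 1))).card := by
              rw [Finset.card_insert_of_notMem hnotmem]; omega
          _ ≤ _ := Finset.card_le_card hins
      rcases hT c hc r with ⟨i₀, hi₀⟩ | hcap
      · exact hfin c hc ⟨i₀, hi₀⟩ (fun i => by omega)
      · obtain ⟨c', hT', hcop, hd⟩ := cap_reach t c r hcap
        exact hfin c' hT' hcop (fun i => (hd i).2)
  obtain ⟨c, _, hcard⟩ := key k le_rfl
  have : (Finset.univ.filter fun i => (c i).val ≤ k * (t + 1)).card ≤ k := by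
    simpa using Finset.card_le_card (Finset.filter_subset _ (Finset.univ : Finset (Fin k)))
  omega


lemma eternalWin_ub (t n k : ℕ) (hn : 1 ≤ n) (hk1 : 1 ≤ k)
    (hub : n ≤ k * (t + 1)) (hlb : (k - 1) * (t + 1) < n) :
    EternalWin (pathGraph n) k t := by
  refine ⟨Tset t n k, ⟨fun i => ⟨i.val * (t + 1), ?_⟩, fun i => ?_⟩, ?_⟩
  · have hik : i.val ≤ k - 1 := by omega
    have := Nat.mul_le_mul_right (t + 1) hik
    omega
  · have hik : i.val ≤ k - 1 := by omega
    have := Nat.mul_le_mul_right (t + 1) hik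
    constructor <;> simp <;> omega
  · intro c hc r
    by_cases hon : ∃ i, c i = r
    · exact Or.inl hon
    · right
      push_neg at hon
      have hrn := r.isLt
      set j := r.val / (t + 1) with hj
      have hdm : j * (t + 1) + r.val % (t + 1) = r.val := by
        rw [hj, Nat.mul_comm]; exact Nat.div_add_mod _ _
      have hmlt : r.val % (t + 1) < t + 1 := Nat.mod_lt _ (by omega)
      have hjlow : j * (t + 1) ≤ r.val := by omega
      have hjhigh : r.val < (j + 1) * (t + 1) := by
        have : (j + 1) * (t + 1) = j * (t + 1) + (t + 1) := by ring
        omega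
      have hjk : j < k := by
        by_contra hjge
        push_neg at hjge
        have := Nat.mul_le_mul_right (t + 1) hjge
        omega
      set jf : Fin k := ⟨j, hjk⟩ with hjf
      have hcj := hc jf
      have hcjvne : (c jf).val ≠ r.val := fun h => hon jf (Fin.ext h)
      rcases Nat.lt_or_ge (c jf).val r.val with hcv | hcv
      · -- cop j is (strictly) left of the robber
        apply chase t n k t c r (min (j * (t + 1) + t) (n - 1) + 1) hc
        · right
          refine ⟨jf, ?_, ?_, hcv, le_refl _⟩
          · simp only [hjf] at hcj ⊢; omega
          · simp only [hjf] at hcj ⊢; omega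
        · by_cases hj1k : j + 1 < k
          · right
            have hblock : (j + 1) * (t + 1) ≤ (k - 1) * (t + 1) := by
              apply Nat.mul_le_mul_right; omega
            have hcb := hc ⟨j + 1, hj1k⟩
            refine ⟨⟨j + 1, hj1k⟩, ?_, ?_, ?_, ?_⟩ <;>
              · simp only at hcb ⊢
                have h1 : (j + 1) * (t + 1) = j * (t + 1) + (t + 1) := by ring
                omega
          · left
            have hjk1 : j + 1 = k := by omega
            have : n ≤ (j + 1) * (t + 1) := by rw [hjk1]; exact hub
            have h1 : (j + 1) * (t + 1) = j * (t + 1) + (t + 1) := by ring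
            omega
      · -- cop j is strictly right of the robber
        have hcv' : r.val < (c jf).val := by omega
        apply chase t n k t c r (j * (t + 1)) hc
        · rcases Nat.eq_zero_or_pos j with hj0 | hjpos
          · left; rw [hj0]; ring
          · right
            have hj1k : j - 1 < k := by omega
            have hca := hc ⟨j - 1, hj1k⟩
            have h1 : (j - 1) * (t + 1) + (t + 1) = j * (t + 1) := by
              have : j - 1 + 1 = j := by omega
              calc (j - 1) * (t + 1) + (t + 1) = (j - 1 + 1) * (t + 1) := by ring
                _ = j * (t + 1) := by rw [this]
            refine ⟨⟨j - 1, hj1k⟩, ?_, ?_, ?_, ?_⟩ <;>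
              · simp only at hca ⊢; omega
        · right
          refine ⟨jf, ?_, ?_, hcv', ?_⟩ <;> · simp only [hjf] at hcj ⊢; omega
    

/-- `c_t^∞(P_n) = ⌈n/(t+1)⌉`. -/
theorem eternalCopNumber_pathGraph (t n : ℕ) (ht : 1 ≤ t) (hn : 1 ≤ n) :
    eternalCopNumber (SimpleGraph.pathGraph n) t = ⌈(n : ℚ) / (t + 1)⌉₊ := by
  set K := ⌈(n : ℚ) / (t + 1)⌉₊ with hK
  have htq : (0 : ℚ) < (t : ℚ) + 1 := by positivity
  have hK1 : 1 ≤ K := by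
    rw [hK]
    apply Nat.one_le_iff_ne_zero.2
    intro h0
    have := Nat.ceil_eq_zero.1 h0
    have : (n : ℚ) / (t + 1) > 0 := by
      apply div_pos _ htq
      exact_mod_cast hn
    linarith
  have hKub : n ≤ K * (t + 1) := by
    have h1 : (n : ℚ) / (t + 1) ≤ K := Nat.le_ceil _
    have h2 : (n : ℚ) ≤ K * ((t : ℚ) + 1) := by
      rw [div_le_iff₀ htq] at h1
      exact h1
    exact_mod_cast h2
  have hKlb : (K - 1) * (t + 1) < n := by
    by_contra hcon
    push_neg at hcon
    have h1 : (n : ℚ) / (t + 1) ≤ ((K - 1 : ℕ) : ℚ) := by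
      rw [div_le_iff₀ htq]
      exact_mod_cast hcon
    have h2 : K ≤ K - 1 := Nat.ceil_le.2 h1
    omega
  unfold eternalCopNumber
  apply le_antisymm
  · exact Nat.sInf_le ⟨hK1, eternalWin_ub t n K hn hK1 hKub hKlb⟩
  · apply le_csInf
    · exact ⟨K, hK1, eternalWin_ub t n K hn hK1 hKub hKlb⟩
    rintro k ⟨hk1, hkw⟩
    have hnk : n ≤ k * (t + 1) := eternalWin_lb hn hkw
    rw [hK]
    apply Nat.ceil_le.2
    rw [div_le_iff₀ htq]
    exact_mod_cast hnk
end

section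
/- For every integer t ≥ 1 and every k ∈ {4, 5, 6}, the eternal cop number of the cycle on k vertices satisfies c_t^∞(C_k) = 2. -/
open SimpleGraph

section Aux

variable {V : Type*} {G : SimpleGraph V} {k : ℕ} {T : Set (Fin k → V)}

instance {V : Type*} [DecidableEq V] (G : SimpleGraph V) [DecidableRel G.Adj] {k : ℕ}
    (c c' : Fin k → V) : Decidable (OneStepMove G c c') :=
  inferInstanceAs (Decidable (∀ _, _ ∨ _))

theorem cap_succ : ∀ (s : ℕ) (c : Fin k → V) (r : V), Cap G T s c r → Cap G T (s + 1) c r := by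
  intro s
  induction s with
  | zero => intro c r h; exact h.elim
  | succ s ih =>
    rintro c r ⟨c', hm, hc⟩
    exact ⟨c', hm, hc.imp id (fun h r' hr' => (h r' hr').imp id (ih c' r'))⟩

theorem cap_of_one {t : ℕ} (ht : 1 ≤ t) {c : Fin k → V} {r : V} (h : Cap G T 1 c r) :
    Cap G T t c r := by
  induction t, ht using Nat.le_induction with
  | base => exact h
  | succ t ht ih => exact cap_succ t c r ih

/-- Escape lemma for a single cop. -/
theorem escape {T : Set (Fin 1 → V)} (P : V → V → Prop)
    (h1 : ∀ a r, P a r → a ≠ r)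
    (h2 : ∀ a b r, (b = a ∨ G.Adj a b) → P a r →
      b ≠ r ∧ ∃ r', (r' = r ∨ G.Adj r r') ∧ P b r') :
    ∀ (s : ℕ) (c : Fin 1 → V) (r : V), P (c 0) r → ¬ Cap G T s c r := by
  intro s
  induction s with
  | zero => intro c r _ h; exact h.elim
  | succ s ih =>
    rintro c r hP ⟨c', hm, hc⟩
    obtain ⟨hb, r', hr', hP'⟩ := h2 (c 0) (c' 0) r (hm 0) hP
    rcases hc with ⟨⟨i, hi⟩, -⟩ | h
    · exact hb (by rw [← Fin.fin_one_eq_zero i]; exact hi)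
    · rcases h r' hr' with ⟨⟨i, hi⟩, -⟩ | hcap
      · exact h1 (c' 0) r' hP' (by rw [← Fin.fin_one_eq_zero i]; exact hi)
      · exact ih c' r' hP' hcap

/-- Two cops win eternally on a cycle, given a one-step recapture certificate. -/
theorem win_two {n : ℕ} (m : Fin n) (hn : 0 < n)
    (h : ∀ c : Fin 2 → Fin n, c 1 = c 0 + m → ∀ r : Fin n,
      (∃ i, c i = r) ∨ ∃ c' : Fin 2 → Fin n, OneStepMove (cycleGraph n) c c' ∧
        c' 1 = c' 0 + m ∧ ∃ i, c' i = r)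
    {t : ℕ} (ht : 1 ≤ t) : EternalWin (cycleGraph n) 2 t := by
  refine ⟨{c | c 1 = c 0 + m}, ⟨![⟨0, hn⟩, ⟨0, hn⟩ + m], by simp⟩, ?_⟩
  intro c hc r
  rcases h c hc r with hcatch | ⟨c', hm, hT, i, hi⟩
  · exact Or.inl hcatch
  · exact Or.inr (cap_of_one ht ⟨c', hm, Or.inl ⟨⟨i, hi⟩, hT⟩⟩)

/-- One cop cannot win eternally on a cycle with at least 4 vertices. -/
theorem no_win_one {n : ℕ} [NeZero n]
    (hstep : ∀ a b r : Fin n, (b = a ∨ (cycleGraph n).Adj a b) →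
      (r ≠ a ∧ r ≠ a + 1 ∧ r ≠ a - 1) →
      b ≠ r ∧ ∃ r', (r' = r ∨ (cycleGraph n).Adj r r') ∧
        (r' ≠ b ∧ r' ≠ b + 1 ∧ r' ≠ b - 1))
    (hstart : ∀ a : Fin n, ∃ r : Fin n, r ≠ a ∧ r ≠ a + 1 ∧ r ≠ a - 1)
    {t : ℕ} : ¬ EternalWin (cycleGraph n) 1 t := by
  rintro ⟨T, ⟨c, hc⟩, hwin⟩
  obtain ⟨r, hr⟩ := hstart (c 0)
  rcases hwin c hc r with ⟨i, hi⟩ | hcap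
  · exact hr.1 (by rw [← Fin.fin_one_eq_zero i, hi])
  · exact escape (fun a r => r ≠ a ∧ r ≠ a + 1 ∧ r ≠ a - 1)
      (fun a r h => fun he => h.1 he.symm)
      (fun a b r => hstep a b r) t c r hr hcap

theorem sInf_eq_two {S : Set ℕ} (h2 : 2 ∈ S) (h1 : 1 ∉ S) (h0 : 0 ∉ S) : sInf S = 2 := by
  refine le_antisymm (Nat.sInf_le h2) (le_csInf ⟨2, h2⟩ fun m hm => ?_)
  match m with
  | 0 => exact absurd hm h0
  | 1 => exact absurd hm h1
  | (m + 2) => omega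

end Aux

/-- for `k ∈ {4,5,6}`, `c_t^∞(C_k) = 2`. -/
theorem eternalCopNumber_smallCycles (t : ℕ) (ht : 1 ≤ t) (k : ℕ)
    (hk : k ∈ ({4, 5, 6} : Set ℕ)) :
    eternalCopNumber (SimpleGraph.cycleGraph k) t = 2 := by
  have key : ∀ (n : ℕ) [NeZero n] (m : Fin n), 0 < n →
      (∀ c : Fin 2 → Fin n, c 1 = c 0 + m → ∀ r : Fin n,
        (∃ i, c i = r) ∨ ∃ c' : Fin 2 → Fin n, OneStepMove (cycleGraph n) c c' ∧
          c' 1 = c' 0 + m ∧ ∃ i, c' i = r) →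
      (∀ a b r : Fin n, (b = a ∨ (cycleGraph n).Adj a b) →
        (r ≠ a ∧ r ≠ a + 1 ∧ r ≠ a - 1) →
        b ≠ r ∧ ∃ r', (r' = r ∨ (cycleGraph n).Adj r r') ∧
          (r' ≠ b ∧ r' ≠ b + 1 ∧ r' ≠ b - 1)) →
      (∀ a : Fin n, ∃ r : Fin n, r ≠ a ∧ r ≠ a + 1 ∧ r ≠ a - 1) →
      eternalCopNumber (SimpleGraph.cycleGraph n) t = 2 := by
    intro n _ m hn hwin hstep hstart
    refine sInf_eq_two ⟨by norm_num, win_two m hn hwin ht⟩ ?_ ?_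
    · rintro ⟨-, hw⟩; exact no_win_one hstep hstart hw
    · rintro ⟨h, -⟩; omega
  rcases hk with rfl | rfl | rfl
  · exact key 4 2 (by norm_num) (by decide) (by decide) (by decide)
  · exact key 5 2 (by norm_num) (by decide) (by decide) (by decide)
  · exact key 6 3 (by norm_num) (by decide) (by decide) (by decide)
end

section
/- Let t ≥ 1 be an integer and let G be a finite simple graph whose vertex set is partitioned into nonempty sets W_1, …, W_p such that each induced subgraph G[W_j] is a retract of G. Suppose for each j there are integers i_j, k_j ≥ 1 such that c_{ℓ_{i_j}}(G[W_j]) ≤ k_j. Then c_t^∞(G) ≤ Σ_{j=1}^p i_j·k_j. -/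
open SimpleGraph

namespace EternalAux

variable {V : Type*}

/-- One step (stay or move along an edge). -/
def SRel (G : SimpleGraph V) (u v : V) : Prop := u = v ∨ G.Adj u v

/-- Reachability by a walk of exactly `n` lazy steps. -/
def RN (G : SimpleGraph V) : ℕ → V → V → Prop
  | 0, u, v => u = v
  | n + 1, u, v => ∃ w, SRel G u w ∧ RN G n w v

lemma srel_refl (G : SimpleGraph V) (u : V) : SRel G u u := Or.inl rfl

lemma srel_symm {G : SimpleGraph V} {u v : V} (h : SRel G u v) : SRel G v u := by
  rcases h with rfl | h
  · exact Or.inl rfl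
  · exact Or.inr h.symm

lemma rn_succ {G : SimpleGraph V} {n : ℕ} {u v : V} (h : RN G n u v) : RN G (n + 1) u v := by
  induction n generalizing u v with
  | zero => exact ⟨v, Or.inl h, rfl⟩
  | succ n ih =>
    obtain ⟨w, h1, h2⟩ := h
    exact ⟨w, h1, ih h2⟩

lemma rn_mono {G : SimpleGraph V} {n m : ℕ} (hnm : n ≤ m) {u v : V} (h : RN G n u v) :
    RN G m u v := by
  induction m with
  | zero => exact (Nat.le_zero.mp hnm) ▸ h
  | succ m ih =>
    rcases Nat.eq_or_lt_of_le hnm with rfl | hlt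
    · exact h
    · exact rn_succ (ih (Nat.lt_succ_iff.mp hlt))

lemma rn_refl (G : SimpleGraph V) (n : ℕ) (u : V) : RN G n u u :=
  rn_mono (Nat.zero_le n) (rfl : RN G 0 u u)

lemma rn_snoc {G : SimpleGraph V} {n : ℕ} {u v w : V} (h : RN G n u v) (hs : SRel G v w) :
    RN G (n + 1) u w := by
  induction n generalizing u with
  | zero => exact ⟨w, h ▸ hs, rfl⟩
  | succ n ih =>
    obtain ⟨x, h1, h2⟩ := h
    exact ⟨x, h1, ih h2⟩

lemma rn_symm {G : SimpleGraph V} {n : ℕ} {u v : V} (h : RN G n u v) : RN G n v u := by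
  induction n generalizing u v with
  | zero => exact h.symm
  | succ n ih =>
    obtain ⟨w, h1, h2⟩ := h
    exact rn_snoc (ih h2) (srel_symm h1)

/-- Transfer a winning capture certificate to more cops via a surjection of cop indices. -/
lemma cap_surj (G : SimpleGraph V) {k k' : ℕ} (π : Fin k' → Fin k)
    (hπ : Function.Surjective π) :
    ∀ (s : ℕ) (c : Fin k → V) (r : V), Cap G Set.univ s c r → Cap G Set.univ s (c ∘ π) r := by
  intro s
  induction s with
  | zero => intro c r h; exact h.elim
  | succ s ih =>
    intro c r h
    obtain ⟨c', h1, h2⟩ := h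
    refine ⟨c' ∘ π, fun i => h1 (π i), ?_⟩
    rcases h2 with ⟨⟨i, hi⟩, -⟩ | h2
    · obtain ⟨i', hi'⟩ := hπ i
      exact Or.inl ⟨⟨i', by simp [Function.comp, hi', hi]⟩, trivial⟩
    · refine Or.inr fun r' hr' => ?_
      rcases h2 r' hr' with ⟨⟨i, hi⟩, -⟩ | hrec
      · obtain ⟨i', hi'⟩ := hπ i
        exact Or.inl ⟨⟨i', by simp [Function.comp, hi', hi]⟩, trivial⟩
      · exact Or.inr (ih c' r' hrec)

lemma timedWin_mono {α : Type*} {G' : SimpleGraph α} {k k' t : ℕ} (hk : 1 ≤ k) (hkk : k ≤ k')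
    (h : TimedWin G' k t) : TimedWin G' k' t := by
  obtain ⟨c, hc⟩ := h
  have h0 : 0 < k := hk
  let π : Fin k' → Fin k := fun i => if h : (i : ℕ) < k then ⟨i, h⟩ else ⟨0, h0⟩
  have hπ : Function.Surjective π := by
    intro j
    refine ⟨⟨j, lt_of_lt_of_le j.2 hkk⟩, ?_⟩
    simp only [π, dif_pos j.2]
  refine ⟨c ∘ π, fun r => ?_⟩
  rcases hc r with ⟨i, hi⟩ | hcap
  · obtain ⟨i', hi'⟩ := hπ i
    exact Or.inl ⟨i', by simp [Function.comp, hi', hi]⟩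
  · exact Or.inr (cap_surj G' π hπ t c r hcap)

lemma timedWin_card {α : Type*} [Fintype α] [Nonempty α] (G' : SimpleGraph α) (t : ℕ) :
    TimedWin G' (Fintype.card α) t :=
  ⟨(Fintype.equivFin α).symm, fun r => Or.inl ⟨Fintype.equivFin α r, by simp⟩⟩

lemma timedWin_of_ccn_le {α : Type*} [Fintype α] [Nonempty α] {G' : SimpleGraph α} {t K : ℕ}
    (h : captureCopNumber G' t ≤ K) (hK : 1 ≤ K) : TimedWin G' K t := by
  have hcard : 0 < Fintype.card α := Fintype.card_pos
  have hne : (Fintype.card α) ∈ {k | 1 ≤ k ∧ TimedWin G' k t} := ⟨hcard, timedWin_card G' t⟩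
  have hmem := Nat.sInf_mem (⟨_, hne⟩ : {k | 1 ≤ k ∧ TimedWin G' k t}.Nonempty)
  exact timedWin_mono hmem.1 h hmem.2

end EternalAux

namespace EternalAux

section Part

variable {V : Type*} (G : SimpleGraph V) {Ws : Set V} {Kc : ℕ}
variable (home : Fin Kc → Ws) (ℓp ρp tp : ℕ)

/-- Invariant for the active team of a part, `s` cop-moves remaining in the round.
`sh` is the shadow of the robber in this part. -/
def AInv (s : ℕ) (z : Fin Kc → Ws) (sh : Ws) : Prop :=
  (∃ n, n + ℓp ≤ s ∧ s ≤ (tp - ρp) + n ∧ ∀ i, RN (G.induce Ws) n (z i) (home i))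
  ∨ (∃ dep β, 1 ≤ dep ∧ dep ≤ s ∧ β + s ≤ tp - ρp ∧
      (∀ i, RN (G.induce Ws) β (home i) (z i)) ∧ Cap (G.induce Ws) Set.univ dep z sh)
  ∨ (∃ i₀ β, SRel (G.induce Ws) (z i₀) sh ∧ β + s ≤ tp - ρp ∧
      ∀ i, RN (G.induce Ws) β (home i) (z i))

/-- Invariant for a whole part. -/
def PInv {Ic : ℕ} (s : ℕ) (y : Fin Ic → Fin Kc → Ws) (sh : Ws) : Prop :=
  ∃ b, (∀ q, q ≠ b → ∀ i, RN (G.induce Ws) s (y q i) (home i)) ∧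
    AInv G home ℓp ρp tp s (y b) sh

/-- The part of the target set `T` corresponding to one part of the partition. -/
def PT {Ic : ℕ} (y : Fin Ic → Fin Kc → Ws) : Prop :=
  ∃ b, (∀ i, RN (G.induce Ws) ρp (y b i) (home i)) ∧
    ∀ q, q ≠ b → ∀ i, RN (G.induce Ws) tp (y q i) (home i)

variable {G home ℓp ρp tp}

lemma active_step
    (hwin : ∀ r₀ : Ws, (∃ i, home i = r₀) ∨ Cap (G.induce Ws) Set.univ ℓp home r₀)
    {s : ℕ} {z : Fin Kc → Ws} {sh : Ws}
    (h : AInv G home ℓp ρp tp (s + 1) z sh) :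
    ∃ z' : Fin Kc → Ws, (∀ i, SRel (G.induce Ws) (z i) (z' i)) ∧
      (∀ sh', SRel (G.induce Ws) sh sh' → AInv G home ℓp ρp tp s z' sh') ∧
      (s = 0 → (∃ i, z' i = sh) ∧ ∃ β, β ≤ tp - ρp ∧
        ∀ i, RN (G.induce Ws) β (home i) (z' i)) := by
  classical
  -- handler for the tracking state
  have stepT : ∀ (i₀ : Fin Kc) (β : ℕ), SRel (G.induce Ws) (z i₀) sh →
      β + (s + 1) ≤ tp - ρp → (∀ i, RN (G.induce Ws) β (home i) (z i)) →
      ∃ z' : Fin Kc → Ws, (∀ i, SRel (G.induce Ws) (z i) (z' i)) ∧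
      (∀ sh', SRel (G.induce Ws) sh sh' → AInv G home ℓp ρp tp s z' sh') ∧
      (s = 0 → (∃ i, z' i = sh) ∧ ∃ β, β ≤ tp - ρp ∧
        ∀ i, RN (G.induce Ws) β (home i) (z' i)) := by
    intro i₀ β htr hβs hβ
    have hup : ∀ i, RN (G.induce Ws) (β + 1) (home i) (Function.update z i₀ sh i) := by
      intro i
      by_cases hi : i = i₀
      · rw [hi, Function.update_self]
        exact rn_snoc (hβ i₀) htr
      · rw [Function.update_of_ne hi]
        exact rn_succ (hβ i)
    refine ⟨Function.update z i₀ sh, ?_, ?_, ?_⟩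
    · intro i
      by_cases hi : i = i₀
      · rw [hi, Function.update_self]
        exact hi ▸ htr
      · rw [Function.update_of_ne hi]
        exact srel_refl _ _
    · intro sh' hsh'
      refine Or.inr (Or.inr ⟨i₀, β + 1, ?_, by omega, hup⟩)
      rw [Function.update_self]
      exact hsh'
    · intro hs0
      exact ⟨⟨i₀, Function.update_self i₀ sh z⟩, β + 1, by omega, hup⟩
  -- handler for the chase state
  have stepC : ∀ (dep β : ℕ), 1 ≤ dep → dep ≤ s + 1 → β + (s + 1) ≤ tp - ρp →
      (∀ i, RN (G.induce Ws) β (home i) (z i)) → Cap (G.induce Ws) Set.univ dep z sh →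
      ∃ z' : Fin Kc → Ws, (∀ i, SRel (G.induce Ws) (z i) (z' i)) ∧
      (∀ sh', SRel (G.induce Ws) sh sh' → AInv G home ℓp ρp tp s z' sh') ∧
      (s = 0 → (∃ i, z' i = sh) ∧ ∃ β, β ≤ tp - ρp ∧
        ∀ i, RN (G.induce Ws) β (home i) (z' i)) := by
    intro dep β hdep1 hdeps hβs hβ hcap
    obtain ⟨d, rfl⟩ : ∃ d, dep = d + 1 := ⟨dep - 1, by omega⟩
    obtain ⟨c'', hmv, hbr⟩ := hcap
    have hleg : ∀ i, SRel (G.induce Ws) (z i) (c'' i) := by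
      intro i
      rcases hmv i with h | h
      · exact Or.inl h.symm
      · exact Or.inr h
    refine ⟨c'', hleg, ?_, ?_⟩
    · intro sh' hsh'
      rcases hbr with ⟨⟨i, hi⟩, -⟩ | hall
      · exact Or.inr (Or.inr ⟨i, β + 1, by rw [hi]; exact hsh', by omega,
          fun j => rn_snoc (hβ j) (hleg j)⟩)
      · have hsh2 : sh' = sh ∨ (G.induce Ws).Adj sh sh' := by
          rcases hsh' with h | h
          · exact Or.inl h.symm
          · exact Or.inr h
        rcases hall sh' hsh2 with ⟨⟨i, hi⟩, -⟩ | hcap'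
        · exact Or.inr (Or.inr ⟨i, β + 1, by rw [hi]; exact srel_refl _ _, by omega,
            fun j => rn_snoc (hβ j) (hleg j)⟩)
        · rcases Nat.eq_zero_or_pos d with rfl | hd
          · exact hcap'.elim
          · exact Or.inr (Or.inl ⟨d, β + 1, hd, by omega, by omega,
              fun j => rn_snoc (hβ j) (hleg j), hcap'⟩)
    · intro hs0
      subst hs0
      have hcov : ∃ i, c'' i = sh := by
        rcases hbr with ⟨⟨i, hi⟩, -⟩ | hall
        · exact ⟨i, hi⟩
        · rcases hall sh (Or.inl rfl) with ⟨⟨i, hi⟩, -⟩ | hcap'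
          · exact ⟨i, hi⟩
          · have : d = 0 := by omega
            subst this
            exact hcap'.elim
      exact ⟨hcov, β + 1, by omega, fun j => rn_snoc (hβ j) (hleg j)⟩
  rcases h with ⟨n, h1, h2, h3⟩ | ⟨dep, β, hdep1, hdeps, hβs, hβ, hcap⟩ | ⟨i₀, β, htr, hβs, hβ⟩
  · -- returning phase
    rcases n with _ | n'
    · -- at home: start a chase
      have hz : z = home := funext fun i => h3 i
      subst hz
      rcases hwin sh with ⟨i₀, hi₀⟩ | hcap
      · exact stepT i₀ 0 (Or.inl hi₀) (by omega) (fun i => rfl)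
      · rcases Nat.eq_zero_or_pos ℓp with hℓ | hℓ
        · rw [hℓ] at hcap
          exact hcap.elim
        · exact stepC ℓp 0 hℓ (by omega) (by omega) (fun i => rfl) hcap
    · -- keep returning
      have hpeel : ∀ i, ∃ w, SRel (G.induce Ws) (z i) w ∧ RN (G.induce Ws) n' w (home i) :=
        fun i => h3 i
      choose w hw1 hw2 using hpeel
      refine ⟨w, hw1, ?_, ?_⟩
      · intro sh' _
        exact Or.inl ⟨n', by omega, by omega, hw2⟩
      · intro hs0
        subst hs0
        have hℓ0 : ℓp = 0 := by omega
        have hn0 : n' = 0 := by omega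
        subst hn0
        have hwh : ∀ i, w i = home i := fun i => hw2 i
        constructor
        · rcases hwin sh with ⟨i₀, hi₀⟩ | hcap
          · exact ⟨i₀, (hwh i₀).trans hi₀⟩
          · rw [hℓ0] at hcap
            exact hcap.elim
        · exact ⟨0, by omega, fun i => (hwh i).symm⟩
  · exact stepC dep β hdep1 hdeps hβs hβ hcap
  · exact stepT i₀ β htr hβs hβ

end Part

end EternalAux

namespace EternalAux

section Part2

variable {V : Type*} {G : SimpleGraph V} {Ws : Set V} {Kc : ℕ}
variable {home : Fin Kc → Ws} {ℓp ρp tp : ℕ}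

lemma part_step {Ic : ℕ}
    (hwin : ∀ r₀ : Ws, (∃ i, home i = r₀) ∨ Cap (G.induce Ws) Set.univ ℓp home r₀)
    (hTT : tp - ρp ≤ ρp ∨ 2 ≤ Ic)
    {s : ℕ} {y : Fin Ic → Fin Kc → Ws} {sh : Ws}
    (h : PInv G home ℓp ρp tp (s + 1) y sh) :
    ∃ y' : Fin Ic → Fin Kc → Ws,
      (∀ q i, SRel (G.induce Ws) (y q i) (y' q i)) ∧
      (∀ sh', SRel (G.induce Ws) sh sh' → PInv G home ℓp ρp tp s y' sh') ∧
      (s = 0 → (∃ q i, y' q i = sh) ∧ PT G home ρp tp y') := by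
  classical
  obtain ⟨b, hoth, hact⟩ := h
  obtain ⟨z', hleg, hnext, hlast⟩ := active_step hwin hact
  have hpeel : ∀ q, q ≠ b → ∀ i, ∃ w, SRel (G.induce Ws) (y q i) w ∧
      RN (G.induce Ws) s w (home i) := fun q hq i => hoth q hq i
  let y' : Fin Ic → Fin Kc → Ws := fun q i =>
    if hq : q = b then z' i else Classical.choose (hpeel q hq i)
  have hyb : y' b = z' := funext fun i => dif_pos rfl
  have hyoth : ∀ q (hq : q ≠ b) i, SRel (G.induce Ws) (y q i) (y' q i) ∧
      RN (G.induce Ws) s (y' q i) (home i) := by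
    intro q hq i
    have := Classical.choose_spec (hpeel q hq i)
    simpa [y', dif_neg hq] using this
  refine ⟨y', ?_, ?_, ?_⟩
  · intro q i
    by_cases hq : q = b
    · subst hq
      rw [hyb]
      exact hleg i
    · exact (hyoth q hq i).1
  · intro sh' hsh'
    refine ⟨b, fun q hq i => (hyoth q hq i).2, ?_⟩
    rw [hyb]
    exact hnext sh' hsh'
  · intro hs0
    subst hs0
    obtain ⟨⟨i₀, hi₀⟩, β, hβle, hβ⟩ := hlast rfl
    have hhome : ∀ q (hq : q ≠ b) i, y' q i = home i := fun q hq i => (hyoth q hq i).2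
    constructor
    · exact ⟨b, i₀, by rw [hyb]; exact hi₀⟩
    · rcases hTT with h1 | h2
      · refine ⟨b, fun i => ?_, fun q hq i => ?_⟩
        · rw [hyb]
          exact rn_mono (le_trans hβle h1) (rn_symm (hβ i))
        · rw [hhome q hq i]
          exact rn_refl _ _ _
      · have hb' : ∃ b' : Fin Ic, b' ≠ b := by
          by_cases hb0 : (b : ℕ) = 0
          · refine ⟨⟨1, by omega⟩, fun hcon => ?_⟩
            have hval := congrArg Fin.val hcon
            simp only [] at hval
            omega
          · refine ⟨⟨0, by omega⟩, fun hcon => ?_⟩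
            have hval := congrArg Fin.val hcon
            simp only [] at hval
            omega
        obtain ⟨b', hb'⟩ := hb'
        refine ⟨b', fun i => ?_, fun q hq i => ?_⟩
        · rw [hhome b' hb' i]
          exact rn_refl _ _ _
        · by_cases hqb : q = b
          · subst hqb
            rw [hyb]
            exact rn_mono (le_trans hβle (Nat.sub_le _ _)) (rn_symm (hβ i))
          · rw [hhome q hqb i]
            exact rn_refl _ _ _

lemma part_start {Ic : ℕ} (hρℓ : ρp + ℓp ≤ tp) (hρt : ρp ≤ tp)
    {y : Fin Ic → Fin Kc → Ws} (h : PT G home ρp tp y) (sh : Ws) :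
    PInv G home ℓp ρp tp tp y sh := by
  obtain ⟨b, hdes, hoth⟩ := h
  exact ⟨b, hoth, Or.inl ⟨ρp, by omega, by omega, hdes⟩⟩

end Part2

end EternalAux

namespace EternalAux

section Glob

variable {V : Type*} {p : ℕ} {W : Fin p → Set V} {Ic Kc : Fin p → ℕ} {k : ℕ}

/-- Assemble per-part cop positions into a single configuration. -/
def asmC (e : (Σ j : Fin p, Fin (Ic j) × Fin (Kc j)) ≃ Fin k)
    (y : ∀ j, Fin (Ic j) → Fin (Kc j) → (W j)) : Fin k → V :=
  fun i0 => ((y (e.symm i0).1 (e.symm i0).2.1 (e.symm i0).2.2 : (W (e.symm i0).1)) : V)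

lemma asmC_apply (e : (Σ j : Fin p, Fin (Ic j) × Fin (Kc j)) ≃ Fin k)
    (y : ∀ j, Fin (Ic j) → Fin (Kc j) → (W j)) (j : Fin p) (q : Fin (Ic j)) (i : Fin (Kc j)) :
    asmC e y (e ⟨j, (q, i)⟩) = ((y j q i : (W j)) : V) := by
  simp only [asmC]
  rw [Equiv.symm_apply_apply]

variable (G : SimpleGraph V)

/-- The target set of cop configurations. -/
def TTset (e : (Σ j : Fin p, Fin (Ic j) × Fin (Kc j)) ≃ Fin k)
    (home : ∀ j, Fin (Kc j) → (W j)) (ρf : Fin p → ℕ) (tg : ℕ) : Set (Fin k → V) :=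
  {x | ∃ y, x = asmC e y ∧ ∀ j, PT G (home j) (ρf j) tg (y j)}

lemma glob (e : (Σ j : Fin p, Fin (Ic j) × Fin (Kc j)) ≃ Fin k)
    (f : Fin p → V → V)
    (hf1 : ∀ j v, f j v ∈ W j)
    (hf2 : ∀ j, ∀ v ∈ W j, f j v = v)
    (hf3 : ∀ j u v, G.Adj u v → f j u = f j v ∨ G.Adj (f j u) (f j v))
    (home : ∀ j, Fin (Kc j) → (W j)) (ℓf ρf : Fin p → ℕ) (tg : ℕ)
    (hwin : ∀ j, ∀ r₀ : (W j), (∃ i, home j i = r₀) ∨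
      Cap (G.induce (W j)) Set.univ (ℓf j) (home j) r₀)
    (hTT : ∀ j, tg - ρf j ≤ ρf j ∨ 2 ≤ Ic j)
    (hcover : ∀ v, ∃ j, v ∈ W j) :
    ∀ (s : ℕ) (y : ∀ j, Fin (Ic j) → Fin (Kc j) → (W j)) (r : V),
      (∀ j, PInv G (home j) (ℓf j) (ρf j) tg (s + 1) (y j) ⟨f j r, hf1 j r⟩) →
      Cap G (TTset G e home ρf tg) (s + 1) (asmC e y) r := by
  have hshstep : ∀ (j : Fin p) (r r' : V), SRel G r r' →
      SRel (G.induce (W j)) ⟨f j r, hf1 j r⟩ ⟨f j r', hf1 j r'⟩ := by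
    intro j r r' h
    rcases h with rfl | h
    · exact Or.inl rfl
    · rcases hf3 j r r' h with h' | h'
      · exact Or.inl (Subtype.ext h')
      · exact Or.inr h'
  intro s
  induction s with
  | zero =>
    intro y r h
    choose y' hleg hnext hlast using fun j => part_step (hwin j) (hTT j) (h j)
    refine ⟨asmC e y', ?_, ?_⟩
    · intro i0
      rcases hleg (e.symm i0).1 (e.symm i0).2.1 (e.symm i0).2.2 with h' | h'
      · exact Or.inl (congrArg Subtype.val h'.symm)
      · exact Or.inr h'
    · obtain ⟨j₀, hj₀⟩ := hcover r
      obtain ⟨⟨q, i, hqi⟩, hptt⟩ := hlast j₀ rfl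
      refine Or.inl ⟨⟨e ⟨j₀, (q, i)⟩, ?_⟩, ⟨y', rfl, fun j => (hlast j rfl).2⟩⟩
      rw [asmC_apply]
      rw [hqi]
      exact hf2 j₀ r hj₀
  | succ s ih =>
    intro y r h
    choose y' hleg hnext hlast using fun j => part_step (hwin j) (hTT j) (h j)
    refine ⟨asmC e y', ?_, ?_⟩
    · intro i0
      rcases hleg (e.symm i0).1 (e.symm i0).2.1 (e.symm i0).2.2 with h' | h'
      · exact Or.inl (congrArg Subtype.val h'.symm)
      · exact Or.inr h'
    · refine Or.inr fun r' hr' => Or.inr ?_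
      have hsr : SRel G r r' := by
        rcases hr' with h' | h'
        · exact Or.inl h'.symm
        · exact Or.inr h'
      exact ih y' r' fun j => hnext j _ (hshstep j r r' hsr)

end Glob

end EternalAux

namespace EternalAux

lemma ell_le_t (t i : ℕ) : ell t i ≤ t := by
  unfold ell
  rw [Int.toNat_le]
  rw [Int.ceil_le]
  push_cast
  have h1 : (0 : ℚ) < (2 : ℚ) ^ (-(i : ℤ)) := zpow_pos (by norm_num) _
  have h2 : (2 : ℚ) ^ (-(i : ℤ)) ≤ 1 := by
    rw [zpow_neg]
    rw [inv_le_one_iff₀]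
    right
    exact one_le_zpow₀ (by norm_num) (by positivity)
  nlinarith [Nat.cast_nonneg (α := ℚ) t]

lemma two_mul_ell_one_le (t : ℕ) : 2 * ell t 1 ≤ t := by
  have hceil : (⌈((1 : ℚ) - 2 ^ (-((1 : ℕ) : ℤ))) * (t : ℚ) - 1 / 2⌉ : ℚ) <
      (((1 : ℚ) - 2 ^ (-((1 : ℕ) : ℤ))) * (t : ℚ) - 1 / 2) + 1 :=
    Int.ceil_lt_add_one _
  have ha2 : 2 * (((1 : ℚ) - 2 ^ (-((1 : ℕ) : ℤ))) * (t : ℚ) - 1 / 2) + 2 = (t : ℚ) + 1 := by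
    norm_num
    ring
  have hq : ((2 * ⌈((1 : ℚ) - 2 ^ (-((1 : ℕ) : ℤ))) * (t : ℚ) - 1 / 2⌉ : ℤ) : ℚ) <
      ((t : ℤ) : ℚ) + 1 := by
    push_cast
    linarith
  have hz : 2 * ⌈((1 : ℚ) - 2 ^ (-((1 : ℕ) : ℤ))) * (t : ℚ) - 1 / 2⌉ < (t : ℤ) + 1 := by
    exact_mod_cast hq
  unfold ell
  omega

end EternalAux


/-- if the vertex set of `G` is partitioned into nonempty sets inducing
retracts, and the `j`-th part satisfies `c_{ℓ_{i_j}}(G[W_j]) ≤ k_j`, then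
`c_t^∞(G) ≤ Σ_j i_j·k_j`. -/
theorem eternalCopNumber_le_sum_of_retract_partition_timed {V : Type*} [Fintype V]
    (G : SimpleGraph V) (t : ℕ) (ht : 1 ≤ t) (p : ℕ) (W : Fin p → Set V)
    (hne : ∀ j, (W j).Nonempty)
    (hdisj : ∀ j j', j ≠ j' → Disjoint (W j) (W j'))
    (hcover : ∀ v, ∃ j, v ∈ W j)
    (hretract : ∀ j, IsRetract G (W j))
    (I K : Fin p → ℕ) (hI : ∀ j, 1 ≤ I j) (hK : ∀ j, 1 ≤ K j)
    (hcapt : ∀ j, captureCopNumber (G.induce (W j)) (ell t (I j)) ≤ K j) :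
    eternalCopNumber G t ≤ ∑ j, I j * K j := by
  classical
  by_cases hp : p = 0
  · subst hp
    have hVempty : IsEmpty V := ⟨fun v => by obtain ⟨j, -⟩ := hcover v; exact j.elim0⟩
    have hempty : {k | 1 ≤ k ∧ EternalWin G k t} = ∅ := by
      ext k
      simp only [Set.mem_setOf_eq, Set.mem_empty_iff_false, iff_false, not_and]
      rintro hk1 ⟨T, ⟨c, hc⟩, -⟩
      exact hVempty.elim (c ⟨0, hk1⟩)
    unfold eternalCopNumber
    rw [hempty, Nat.sInf_empty]
    exact Nat.zero_le _
  · obtain ⟨t', rfl⟩ : ∃ t', t = t' + 1 := ⟨t - 1, by omega⟩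
    set t := t' + 1 with htdef
    have hj₀ : 0 < p := Nat.pos_of_ne_zero hp
    let j₀ : Fin p := ⟨0, hj₀⟩
    choose f hf1 hf2 hf3 using hretract
    have hwin0 : ∀ j, TimedWin (G.induce (W j)) (K j) (ell t (I j)) := by
      intro j
      haveI : Fintype (W j) := Fintype.ofFinite _
      haveI : Nonempty (W j) := (hne j).to_subtype
      exact EternalAux.timedWin_of_ccn_le (hcapt j) (hK j)
    choose home hhome using hwin0
    have hcard : Fintype.card (Σ j : Fin p, Fin (I j) × Fin (K j)) = ∑ j, I j * K j := by
      simp [Fintype.card_sigma]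
    let e : (Σ j : Fin p, Fin (I j) × Fin (K j)) ≃ Fin (∑ j, I j * K j) :=
      Fintype.equivFinOfCardEq hcard
    let ρf : Fin p → ℕ := fun j => if I j = 1 then t - ell t (I j) else 0
    have hρt : ∀ j, ρf j ≤ t := by
      intro j
      have hel := EternalAux.ell_le_t t (I j)
      simp only [ρf]
      split <;> omega
    have hρℓ : ∀ j, ρf j + ell t (I j) ≤ t := by
      intro j
      have hel := EternalAux.ell_le_t t (I j)
      simp only [ρf]
      split <;> omega
    have hTT : ∀ j, t - ρf j ≤ ρf j ∨ 2 ≤ I j := by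
      intro j
      by_cases h1 : I j = 1
      · left
        have h2ℓ := EternalAux.two_mul_ell_one_le t
        have hel := EternalAux.ell_le_t t (I j)
        simp only [ρf, if_pos h1]
        rw [h1]
        rw [h1] at hel
        omega
      · right
        have := hI j
        omega
    have hEW : EternalWin G (∑ j, I j * K j) t := by
      refine ⟨EternalAux.TTset G e home ρf t, ?_, ?_⟩
      · refine ⟨EternalAux.asmC e (fun j _ i => home j i),
          ⟨fun j _ i => home j i, rfl, fun j => ⟨⟨0, hI j⟩, fun i => EternalAux.rn_refl _ _ _,
            fun q _ i => EternalAux.rn_refl _ _ _⟩⟩⟩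
      · rintro c ⟨y, rfl, hy⟩ r
        refine Or.inr ?_
        exact EternalAux.glob G e f hf1 hf2 hf3 home (fun j => ell t (I j)) ρf t
          hhome hTT hcover t' y r
          (fun j => EternalAux.part_start (hρℓ j) (hρt j) (hy j) ⟨f j r, hf1 j r⟩)
    have hk1 : 1 ≤ ∑ j, I j * K j := by
      have h1 : 1 ≤ I j₀ * K j₀ := Nat.one_le_iff_ne_zero.mpr
        (Nat.mul_ne_zero (by have := hI j₀; omega) (by have := hK j₀; omega))
      exact le_trans h1 (Finset.single_le_sum (f := fun j => I j * K j) (fun j _ => Nat.zero_le _) (Finset.mem_univ j₀))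
    exact Nat.sInf_le ⟨hk1, hEW⟩
end

section
/- Let T be a tree with at least two vertices and let r be its radius. Then c_r(T) = 1; that is, a single cop, suitably placed, can capture a robber on T within r time-steps. -/
open SimpleGraph

/-!
Put the cop on a center `v` of the tree and let it always step towards the robber. Rooting the
tree at `v`, the cop stays a proper ancestor of the robber (`c` is an ancestor of `r` when
`dist v r = dist v c + dist c r`): the robber can only leave the subtree below the cop through
the cop's parent edge, which the cop blocks, since a vertex of a tree has only one neighbour
closer to the root. Each move takes the cop one level deeper, and no vertex
is deeper than the radius, so the robber is caught within that many moves.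
-/

namespace SimpleGraph

variable {V : Type*} {G : SimpleGraph V}

lemma Reachable.exists_adj_dist_add_one {c r : V} (hcr : G.Reachable c r) (hne : c ≠ r) :
    ∃ n, G.Adj c n ∧ G.dist n r + 1 = G.dist c r := by
  obtain ⟨p, hp⟩ := hcr.exists_walk_length_eq_dist
  cases p with
  | nil => exact absurd rfl hne
  | @cons _ n _ hadj q =>
    refine ⟨n, hadj, le_antisymm ?_ ?_⟩
    · simpa [← hp] using dist_le q
    · have := hadj.reachable.dist_triangle_left r
      rw [dist_eq_one_iff_adj.mpr hadj] at this
      omega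

lemma IsAcyclic.eq_of_adj_of_dist_add_one (hG : G.IsAcyclic) {v x y z : V}
    (hy : G.Adj y x) (hz : G.Adj z x)
    (hdy : G.dist v y + 1 = G.dist v x) (hdz : G.dist v z + 1 = G.dist v x) : y = z := by
  have hvx : G.Reachable v x := Reachable.of_dist_ne_zero (by omega)
  obtain ⟨p, hp⟩ := (hvx.trans hy.symm.reachable).exists_walk_length_eq_dist
  obtain ⟨q, hq⟩ := (hvx.trans hz.symm.reachable).exists_walk_length_eq_dist
  have hpy := (p.concat hy).isPath_of_length_eq_dist (by simp [hp, hdy])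
  have hqz := (q.concat hz).isPath_of_length_eq_dist (by simp [hq, hdz])
  have hpq : p.concat hy = q.concat hz :=
    congrArg Subtype.val ((hG.subsingleton_path v x).elim ⟨_, hpy⟩ ⟨_, hqz⟩)
  simpa only [Walk.penultimate_concat] using congrArg Walk.penultimate hpq

lemma IsTree.dist_eq_add_dist_of_adj (hT : G.IsTree) {v x y y' : V} (hxy : x ≠ y)
    (hy : G.dist v y = G.dist v x + G.dist x y) (hadj : G.Adj y y') :
    G.dist v y' = G.dist v x + G.dist x y' := by
  have htri : ∀ a b c : V, G.dist a c ≤ G.dist a b + G.dist b c := fun _ _ _ =>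
    hT.connected.dist_triangle
  rcases hT.dist_eq_dist_add_one_of_adj v hadj with hup | hdown
  · -- `y'` is the parent of `y`; so is the next vertex `p` on the geodesic from `y` back to `x`.
    obtain ⟨p, hyp, hpx⟩ := (hT.connected y x).exists_adj_dist_add_one hxy.symm
    have hxp : G.dist x p + 1 = G.dist x y := by rw [dist_comm, hpx, dist_comm]
    have hp : G.dist v p + 1 = G.dist v y := by
      have := htri v x p
      have := htri v p y
      have : G.dist p y = 1 := dist_eq_one_iff_adj.mpr hyp.symm
      omega
    obtain rfl : p = y' :=
      hT.isAcyclic.eq_of_adj_of_dist_add_one hyp.symm hadj.symm hp (by omega)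
    omega
  · have := htri v x y'
    have := htri x y y'
    have : G.dist y y' = 1 := dist_eq_one_iff_adj.mpr hadj
    omega

lemma IsTree.cap_of_dist_eq_add_dist (hT : G.IsTree) {v c r : V} (s : ℕ) (hcr : c ≠ r)
    (hr : G.dist v r = G.dist v c + G.dist c r) (hheight : ∀ u, G.dist v u ≤ G.dist v c + s) :
    Cap G Set.univ s (fun _ : Fin 1 => c) r := by
  induction s generalizing c r with
  | zero =>
    have := hT.connected.pos_dist_of_ne hcr
    have := hheight r
    omega
  | succ s ih =>
    obtain ⟨n, hcn, hnr⟩ := (hT.connected c r).exists_adj_dist_add_one hcr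
    have hn : G.dist v n = G.dist v c + 1 := by
      have := hT.connected.dist_triangle (u := v) (v := c) (w := n)
      have := hT.connected.dist_triangle (u := v) (v := n) (w := r)
      have : G.dist c n = 1 := dist_eq_one_iff_adj.mpr hcn
      omega
    refine ⟨fun _ => n, fun _ => Or.inr hcn, ?_⟩
    by_cases hn_r : n = r
    · exact Or.inl ⟨⟨0, hn_r⟩, Set.mem_univ _⟩
    refine Or.inr fun r' hr' => ?_
    by_cases hn_r' : n = r'
    · exact Or.inl ⟨⟨0, hn_r'⟩, Set.mem_univ _⟩
    have hr_n : G.dist v r = G.dist v n + G.dist n r := by omega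
    have hr'_n : G.dist v r' = G.dist v n + G.dist n r' := by
      rcases hr' with rfl | hadj
      · exact hr_n
      · exact hT.dist_eq_add_dist_of_adj hn_r hr_n hadj
    exact Or.inr (ih hn_r' hr'_n fun u => by have := hheight u; omega)

end SimpleGraph

open SimpleGraph

lemma exists_forall_dist_le_graphRadius {V : Type*} [Finite V] [Nonempty V]
    (G : SimpleGraph V) : ∃ v, ∀ u, G.dist v u ≤ graphRadius G := by
  obtain ⟨v₀⟩ := ‹Nonempty V›
  obtain ⟨b, hb⟩ := (Set.finite_range (G.dist v₀)).bddAbove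
  have hb' : b ∈ {r | ∃ v, ∀ u, G.dist v u ≤ r} := ⟨v₀, fun u => hb ⟨u, rfl⟩⟩
  exact Nat.sInf_mem ⟨b, hb'⟩

lemma captureCopNumber_eq_one {V : Type*} {G : SimpleGraph V} {t : ℕ} (h : TimedWin G 1 t) :
    captureCopNumber G t = 1 := by
  have h1 : 1 ∈ {k | 1 ≤ k ∧ TimedWin G k t} := ⟨le_rfl, h⟩
  exact le_antisymm (Nat.sInf_le h1) (Nat.sInf_mem ⟨1, h1⟩).1

theorem captureCopNumber_tree_radius_general {V : Type*} [Fintype V] (G : SimpleGraph V)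
    (hT : G.IsTree) :
    captureCopNumber G (graphRadius G) = 1 := by
  have := hT.connected.nonempty
  obtain ⟨v, hv⟩ := exists_forall_dist_le_graphRadius G
  refine captureCopNumber_eq_one ⟨fun _ => v, fun r => ?_⟩
  by_cases hvr : v = r
  · exact Or.inl ⟨0, hvr⟩
  · exact Or.inr (hT.cap_of_dist_eq_add_dist (v := v) _ hvr (by simp) (by simpa using hv))

/-- for a tree `T` with at least two vertices and radius `r`, `c_r(T) = 1`. -/
theorem captureCopNumber_tree_radius {V : Type*} [Fintype V] (G : SimpleGraph V)
    (hT : G.IsTree) (h2 : 2 ≤ Fintype.card V) :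
    captureCopNumber G (graphRadius G) = 1 :=
  captureCopNumber_tree_radius_general G hT
end

section
/- Let t ≥ 1 be an integer and let T be a tree whose vertex set is partitioned into nonempty sets W_1, …, W_p such that each induced subgraph T[W_j] is connected. Suppose for each j there is an integer i_j ≥ 1 such that the radius of T[W_j] is at most ℓ_{i_j}. Then c_t^∞(T) ≤ Σ_{j=1}^p i_j. -/
open SimpleGraph

set_option maxHeartbeats 1600000
set_option linter.unusedVariables false
set_option linter.unusedSectionVars false


namespace EternalAux

variable {V : Type*} {G : SimpleGraph V}

/-- In a tree, every path realizes the distance. -/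
lemma path_length_eq_dist (hT : G.IsTree) {a b : V} (q : G.Walk a b) (hq : q.IsPath) :
    q.length = G.dist a b := by
  obtain ⟨w, hw, hl⟩ := hT.isConnected.exists_path_of_dist a b
  have : q = w := (hT.existsUnique_path a b).unique hq hw
  rw [this, hl]

lemma dist_adj_le_one (hc : G.Connected) {x y : V} (h : G.Adj x y) : G.dist x y ≤ 1 :=
  le_of_eq (dist_eq_one_iff_adj.mpr h)

/-- In a tree, distances to the two endpoints of an edge differ by exactly one. -/
lemma tree_dist_adj (hT : G.IsTree) (a : V) {y y' : V} (h : G.Adj y y') :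
    G.dist a y' = G.dist a y + 1 ∨ G.dist a y = G.dist a y' + 1 := by
  classical
  obtain ⟨P, hP, hPl⟩ := hT.isConnected.exists_path_of_dist a y
  by_cases hm : y' ∈ P.support
  · right
    have hdrop : (P.dropUntil y' hm).IsPath := hP.dropUntil hm
    have htake : (P.takeUntil y' hm).IsPath := hP.takeUntil hm
    have hlen : (P.takeUntil y' hm).length + (P.dropUntil y' hm).length = P.length := by
      rw [← Walk.length_append, Walk.take_spec]
    have h1 : (P.dropUntil y' hm).length = G.dist y' y := path_length_eq_dist hT _ hdrop
    have h2 : (P.takeUntil y' hm).length = G.dist a y' := path_length_eq_dist hT _ htake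
    have hyy : G.dist y' y = 1 := dist_eq_one_iff_adj.mpr h.symm
    rw [h1, h2, hyy, hPl] at hlen
    omega
  · left
    have hR : (Walk.cons h.symm P.reverse).IsPath := by
      rw [Walk.cons_isPath_iff]
      refine ⟨hP.reverse, ?_⟩
      rw [Walk.support_reverse, List.mem_reverse]
      exact hm
    have := path_length_eq_dist hT _ hR
    rw [Walk.length_cons, Walk.length_reverse, hPl] at this
    rw [dist_comm, ← this]

/-- Betweenness comparison in a tree. -/
lemma tree_between (hT : G.IsTree) {a b x y : V}
    (hx : G.dist a x + G.dist x b = G.dist a b)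
    (hy : G.dist a y + G.dist y b = G.dist a b)
    (hle : G.dist a x ≤ G.dist a y) :
    G.dist a x + G.dist x y = G.dist a y := by
  classical
  obtain ⟨w1, hw1⟩ := hT.isConnected.exists_walk_length_eq_dist a x
  obtain ⟨w2, hw2⟩ := hT.isConnected.exists_walk_length_eq_dist x b
  obtain ⟨q1, hq1⟩ := hT.isConnected.exists_walk_length_eq_dist a y
  obtain ⟨q2, hq2⟩ := hT.isConnected.exists_walk_length_eq_dist y b
  have hP : (w1.append w2).IsPath := by
    apply Walk.isPath_of_length_eq_dist
    rw [Walk.length_append, hw1, hw2, hx]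
  have hQ : (q1.append q2).IsPath := by
    apply Walk.isPath_of_length_eq_dist
    rw [Walk.length_append, hq1, hq2, hy]
  have hPQ : q1.append q2 = w1.append w2 := (hT.existsUnique_path a b).unique hQ hP
  have hymem : y ∈ (w1.append w2).support := by
    rw [← hPQ, Walk.mem_support_append_iff]
    exact Or.inl (Walk.end_mem_support _)
  have hw1p : w1.IsPath := Walk.isPath_of_length_eq_dist _ (by rw [hw1])
  have hw2p : w2.IsPath := Walk.isPath_of_length_eq_dist _ (by rw [hw2])
  rw [Walk.mem_support_append_iff] at hymem
  by_cases hy2 : y ∈ w2.support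
  · have htake : (w2.takeUntil y hy2).IsPath := hw2p.takeUntil hy2
    have hdrop : (w2.dropUntil y hy2).IsPath := hw2p.dropUntil hy2
    have hlen : (w2.takeUntil y hy2).length + (w2.dropUntil y hy2).length = w2.length := by
      rw [← Walk.length_append, Walk.take_spec]
    have e1 : (w2.takeUntil y hy2).length = G.dist x y := path_length_eq_dist hT _ htake
    have e2 : (w2.dropUntil y hy2).length = G.dist y b := path_length_eq_dist hT _ hdrop
    rw [e1, e2, hw2] at hlen
    omega
  · have hy1 : y ∈ w1.support := by tauto
    have htake : (w1.takeUntil y hy1).IsPath := hw1p.takeUntil hy1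
    have hdrop : (w1.dropUntil y hy1).IsPath := hw1p.dropUntil hy1
    have hlen : (w1.takeUntil y hy1).length + (w1.dropUntil y hy1).length = w1.length := by
      rw [← Walk.length_append, Walk.take_spec]
    have e1 : (w1.takeUntil y hy1).length = G.dist a y := path_length_eq_dist hT _ htake
    have e2 : (w1.dropUntil y hy1).length = G.dist y x := path_length_eq_dist hT _ hdrop
    rw [e1, e2, hw1] at hlen
    have hxy : G.dist x y = G.dist y x := dist_comm
    omega

/-- Step one vertex along a geodesic toward `y`. -/
lemma step_toward (hc : G.Connected) {x y : V} (h : 1 ≤ G.dist x y) :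
    ∃ x', G.Adj x x' ∧ G.dist x' y + 1 = G.dist x y := by
  obtain ⟨w, hw⟩ := hc.exists_walk_length_eq_dist x y
  cases w with
  | nil => rw [Walk.length_nil] at hw; omega
  | @cons _ x' _ ha w' =>
    refine ⟨x', ha, ?_⟩
    rw [Walk.length_cons] at hw
    have h1 : G.dist x' y ≤ w'.length := dist_le w'
    have h2 : G.dist x y ≤ 1 + G.dist x' y := by
      calc G.dist x y ≤ G.dist x x' + G.dist x' y := hc.dist_triangle
        _ ≤ 1 + G.dist x' y := by
            have := dist_adj_le_one hc ha
            omega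
    omega

end EternalAux

namespace EternalAux
variable {V : Type*} {G : SimpleGraph V}

/-- One chase step: the cop keeps the geodesic invariant against any robber move. -/
lemma chase_step (hT : G.IsTree) {x₀ x y : V}
    (hgeo : G.dist x₀ x + G.dist x y = G.dist x₀ y)
    (hd : 2 ≤ G.dist x y) :
    ∃ x', G.Adj x x' ∧ G.dist x₀ x' = G.dist x₀ x + 1 ∧
      ∀ y', (y' = y ∨ G.Adj y y') → G.dist x₀ x' + G.dist x' y' = G.dist x₀ y' := by
  obtain ⟨x', hadj, hstep⟩ := step_toward hT.isConnected (x := x) (y := y) (by omega)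
  have htri1 : G.dist x₀ x' ≤ G.dist x₀ x + 1 := by
    have h1 : G.dist x₀ x' ≤ G.dist x₀ x + G.dist x x' := hT.isConnected.dist_triangle
    have h2 : G.dist x x' ≤ 1 := dist_adj_le_one hT.isConnected hadj
    omega
  have htri2 : G.dist x₀ y ≤ G.dist x₀ x' + G.dist x' y := hT.isConnected.dist_triangle
  have hx' : G.dist x₀ x' = G.dist x₀ x + 1 := by omega
  have hbet : G.dist x₀ x' + G.dist x' y = G.dist x₀ y := by omega
  refine ⟨x', hadj, hx', ?_⟩
  rintro y' (rfl | hyadj)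
  · exact hbet
  · rcases tree_dist_adj hT x' hyadj with h1 | h1
    · -- dist x' y' = dist x' y + 1
      rcases tree_dist_adj hT x₀ hyadj with h2 | h2
      · omega
      · -- dist x₀ y = dist x₀ y' + 1 : y' between x₀ and y; x' between x₀ and y
        exfalso
        have hy'bet : G.dist x₀ y' + G.dist y' y = G.dist x₀ y := by
          have := dist_eq_one_iff_adj.mpr hyadj.symm
          omega
        have hle : G.dist x₀ x' ≤ G.dist x₀ y' := by omega
        have := tree_between hT hbet hy'bet hle
        omega
    · -- dist x' y = dist x' y' + 1 (robber toward cop)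
      rcases tree_dist_adj hT x₀ hyadj with h2 | h2
      · -- dist x₀ y' = dist x₀ y + 1 : impossible by triangle
        have : G.dist x₀ y' ≤ G.dist x₀ x' + G.dist x' y' := hT.isConnected.dist_triangle
        omega
      · omega

/-- The unique path between two vertices of a connected induced subgraph stays inside it,
and the ambient distance is at most the induced distance. -/
lemma subtree_path (hT : G.IsTree) {S : Set V} (hS : (G.induce S).Connected)
    {a b : V} (ha : a ∈ S) (hb : b ∈ S) :
    ∃ P : G.Walk a b, P.IsPath ∧ (∀ z ∈ P.support, z ∈ S) ∧
      P.length ≤ (G.induce S).dist ⟨a, ha⟩ ⟨b, hb⟩ := by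
  classical
  obtain ⟨w, hw⟩ := hS.exists_walk_length_eq_dist ⟨a, ha⟩ ⟨b, hb⟩
  let f : G.induce S →g G := (SimpleGraph.Embedding.induce S).toHom
  have hmap : (w.map f).length = (G.induce S).dist ⟨a, ha⟩ ⟨b, hb⟩ := by
    rw [Walk.length_map, hw]
  refine ⟨(w.map f).bypass, Walk.bypass_isPath _, ?_, ?_⟩
  · intro z hz
    have hz' : z ∈ (w.map f).support := Walk.support_bypass_subset _ hz
    rw [Walk.support_map] at hz'
    obtain ⟨⟨z', hz'S⟩, _, rfl⟩ := List.mem_map.mp hz'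
    exact hz'S
  · calc (w.map f).bypass.length ≤ (w.map f).length := Walk.length_bypass_le _
      _ = _ := hmap

lemma dist_le_induced (hT : G.IsTree) {S : Set V} (hS : (G.induce S).Connected)
    {a b : V} (ha : a ∈ S) (hb : b ∈ S) :
    G.dist a b ≤ (G.induce S).dist ⟨a, ha⟩ ⟨b, hb⟩ := by
  obtain ⟨P, hP, _, hlen⟩ := subtree_path hT hS ha hb
  exact le_trans (dist_le P) hlen

/-- Betweenness points of two vertices of a connected induced subgraph lie in it. -/
lemma between_mem (hT : G.IsTree) {S : Set V} (hS : (G.induce S).Connected)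
    {a b : V} (ha : a ∈ S) (hb : b ∈ S) {z : V}
    (hz : G.dist a z + G.dist z b = G.dist a b) : z ∈ S := by
  obtain ⟨P, hP, hsupp, _⟩ := subtree_path hT hS ha hb
  obtain ⟨w1, hw1⟩ := hT.isConnected.exists_walk_length_eq_dist a z
  obtain ⟨w2, hw2⟩ := hT.isConnected.exists_walk_length_eq_dist z b
  have hQ : (w1.append w2).IsPath := by
    apply Walk.isPath_of_length_eq_dist
    rw [Walk.length_append, hw1, hw2, hz]
  have : w1.append w2 = P := (hT.existsUnique_path a b).unique hQ hP
  apply hsupp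
  rw [← this, Walk.mem_support_append_iff]
  exact Or.inl (Walk.end_mem_support _)

end EternalAux

namespace EternalAux
variable {V : Type*} {G : SimpleGraph V}

/-- First vertex of a walk lying in `S` (or the endpoint). -/
def firstIn (S : Set V) [DecidablePred (· ∈ S)] : {a b : V} → G.Walk a b → V
  | a, _, .nil => a
  | a, _, .cons _ w => if a ∈ S then a else firstIn S w

lemma firstIn_mem (S : Set V) [DecidablePred (· ∈ S)] :
    ∀ {a b : V} (w : G.Walk a b), b ∈ S → firstIn S w ∈ S
  | a, _, .nil, hb => hb
  | a, _, .cons _ w, hb => by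
      rw [firstIn]
      split
      · assumption
      · exact firstIn_mem S w hb

lemma firstIn_of_mem (S : Set V) [DecidablePred (· ∈ S)] {a b : V} (w : G.Walk a b)
    (ha : a ∈ S) : firstIn S w = a := by
  cases w with
  | nil => rfl
  | cons e w => rw [firstIn, if_pos ha]

lemma firstIn_cons (S : Set V) [DecidablePred (· ∈ S)] {a c b : V} (e : G.Adj a c)
    (w : G.Walk c b) (ha : a ∉ S) : firstIn S (Walk.cons e w) = firstIn S w := by
  rw [firstIn, if_neg ha]

section Gate
variable [DecidableEq V] (P : ∀ a b : V, G.Walk a b)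

/-- The gate of `S` (with base point `u ∈ S`) seen from `r`. -/
noncomputable def gateTo (S : Set V) [DecidablePred (· ∈ S)] (u r : V) : V :=
  firstIn S (P r u)

variable {S : Set V} [DecidablePred (· ∈ S)] {u : V}

lemma gateTo_mem (hPp : ∀ a b, (P a b).IsPath) (hu : u ∈ S) (r : V) :
    gateTo P S u r ∈ S :=
  firstIn_mem S _ hu

lemma gateTo_of_mem {r : V} (hr : r ∈ S) : gateTo P S u r = r :=
  firstIn_of_mem S _ hr

lemma support_subset_of_mem (hT : G.IsTree) (hPp : ∀ a b, (P a b).IsPath)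
    (hS : (G.induce S).Connected) {a b : V} (ha : a ∈ S) (hb : b ∈ S) :
    ∀ z ∈ (P a b).support, z ∈ S := by
  obtain ⟨Q, hQ, hsupp, _⟩ := subtree_path hT hS ha hb
  have : Q = P a b := (hT.existsUnique_path a b).unique hQ (hPp a b)
  rw [← this]
  exact hsupp

lemma gateTo_step (hT : G.IsTree) (hPp : ∀ a b, (P a b).IsPath)
    (hS : (G.induce S).Connected) (hu : u ∈ S) {r r' : V} (hadj : G.Adj r r') :
    gateTo P S u r' = gateTo P S u r ∨ G.Adj (gateTo P S u r) (gateTo P S u r') := by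
  by_cases hr : r ∈ S <;> by_cases hr' : r' ∈ S
  · right
    rw [gateTo_of_mem P hr, gateTo_of_mem P hr']
    exact hadj
  · -- r ∈ S, r' ∉ S : P r' u = cons hadj.symm (P r u), gate r' = gate r
    left
    have hsupp := support_subset_of_mem P hT hPp hS hr hu
    have hcons : (Walk.cons hadj.symm (P r u)).IsPath := by
      rw [Walk.cons_isPath_iff]
      exact ⟨hPp r u, fun hmem => hr' (hsupp _ hmem)⟩
    have heq : Walk.cons hadj.symm (P r u) = P r' u :=
      (hT.existsUnique_path r' u).unique hcons (hPp r' u)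
    unfold gateTo
    rw [← heq, firstIn_cons S _ _ hr']
  · -- r ∉ S, r' ∈ S : P r u = cons hadj (P r' u), gate r = r' = gate r'
    left
    have hsupp := support_subset_of_mem P hT hPp hS hr' hu
    have hcons : (Walk.cons hadj (P r' u)).IsPath := by
      rw [Walk.cons_isPath_iff]
      exact ⟨hPp r' u, fun hmem => hr (hsupp _ hmem)⟩
    have heq : Walk.cons hadj (P r' u) = P r u :=
      (hT.existsUnique_path r u).unique hcons (hPp r u)
    unfold gateTo
    rw [← heq, firstIn_cons S _ _ hr]
  · -- both outside
    left
    rcases tree_dist_adj hT u hadj with hcase | hcase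
    · -- dist u r' = dist u r + 1
      have hmem : r' ∉ (P r u).support := by
        intro hmem
        have h1 : G.dist r' u ≤ ((P r u).dropUntil r' hmem).length := dist_le _
        have h2 : ((P r u).dropUntil r' hmem).length ≤ (P r u).length :=
          Walk.length_dropUntil_le _ hmem
        have h3 : (P r u).length = G.dist r u := path_length_eq_dist hT _ (hPp r u)
        have hc1 : G.dist r' u = G.dist u r' := SimpleGraph.dist_comm
        have hc2 : G.dist r u = G.dist u r := SimpleGraph.dist_comm
        omega
      have hcons : (Walk.cons hadj.symm (P r u)).IsPath := by
        rw [Walk.cons_isPath_iff]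
        exact ⟨hPp r u, hmem⟩
      have heq : Walk.cons hadj.symm (P r u) = P r' u :=
        (hT.existsUnique_path r' u).unique hcons (hPp r' u)
      unfold gateTo
      rw [← heq, firstIn_cons S _ _ hr']
    · -- dist u r = dist u r' + 1
      have hmem : r ∉ (P r' u).support := by
        intro hmem
        have h1 : G.dist r u ≤ ((P r' u).dropUntil r hmem).length := dist_le _
        have h2 : ((P r' u).dropUntil r hmem).length ≤ (P r' u).length :=
          Walk.length_dropUntil_le _ hmem
        have h3 : (P r' u).length = G.dist r' u := path_length_eq_dist hT _ (hPp r' u)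
        have hc1 : G.dist r' u = G.dist u r' := SimpleGraph.dist_comm
        have hc2 : G.dist r u = G.dist u r := SimpleGraph.dist_comm
        omega
      have hcons : (Walk.cons hadj (P r' u)).IsPath := by
        rw [Walk.cons_isPath_iff]
        exact ⟨hPp r' u, hmem⟩
      have heq : Walk.cons hadj (P r' u) = P r u :=
        (hT.existsUnique_path r u).unique hcons (hPp r u)
      unfold gateTo
      rw [← heq, firstIn_cons S _ _ hr]

end Gate
end EternalAux

lemma ell_le_self (t i : ℕ) : ell t i ≤ t := by
  unfold ell
  have h0 : (0:ℚ) ≤ 2 ^ (-(i:ℤ)) := by positivity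
  have ht0 : (0:ℚ) ≤ (t:ℚ) := by positivity
  have h1 : ((1:ℚ) - 2 ^ (-(i:ℤ))) * t - 1/2 ≤ (t:ℚ) := by nlinarith
  have h2 : ⌈((1:ℚ) - 2 ^ (-(i:ℤ))) * t - 1/2⌉ ≤ (t:ℤ) := by
    rw [Int.ceil_le]; exact_mod_cast h1
  omega

lemma two_ell_one_le (t : ℕ) : 2 * ell t 1 ≤ t := by
  unfold ell
  simp only [Nat.cast_one]
  rw [show ((1:ℚ) - 2 ^ (-(1:ℤ))) * t - 1/2 = ((t:ℚ) - 1)/2 by norm_num; ring]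
  have h1 : (⌈((t:ℚ) - 1)/2⌉ : ℚ) < ((t:ℚ)-1)/2 + 1 := Int.ceil_lt_add_one _
  have h2 : (2 * ⌈((t:ℚ) - 1)/2⌉ : ℤ) < (t:ℤ) + 1 := by
    have h3 : ((2 * ⌈((t:ℚ) - 1)/2⌉ : ℤ) : ℚ) < (t:ℚ) + 1 := by push_cast; linarith
    exact_mod_cast h3
  omega




lemma main_win {V : Type*} [Fintype V] {G : SimpleGraph V} (hT : G.IsTree) (t : ℕ) (ht : 1 ≤ t)
    {p : ℕ} (W : Fin p → Set V) (hne : ∀ j, (W j).Nonempty)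
    (hcover : ∀ v, ∃ j, v ∈ W j)
    (hconn : ∀ j, (G.induce (W j)).Connected)
    (I : Fin p → ℕ) (hI : ∀ j, 1 ≤ I j)
    (hrad : ∀ j, graphRadius (G.induce (W j)) ≤ ell t (I j)) :
    EternalWin G (∑ j, I j) t := by
  classical
  -- canonical paths
  choose P hPp using fun a b : V => (hT.existsUnique_path a b).exists
  -- centers
  have hcent : ∀ j, ∃ v : V, v ∈ W j ∧ ∀ w, w ∈ W j → G.dist v w ≤ ell t (I j) := by
    intro j
    have hne' : Nonempty ↥(W j) := (hne j).to_subtype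
    obtain ⟨v₀⟩ := hne'
    have hset : {r | ∃ v : ↥(W j), ∀ u, (G.induce (W j)).dist v u ≤ r}.Nonempty := by
      refine ⟨Finset.univ.sup (fun u : ↥(W j) => (G.induce (W j)).dist v₀ u), v₀, ?_⟩
      intro w
      exact Finset.le_sup (Finset.mem_univ w)
    obtain ⟨v, hv⟩ := Nat.sInf_mem hset
    refine ⟨v, v.2, ?_⟩
    intro w hw
    have h1 : G.dist (v : V) w ≤ (G.induce (W j)).dist v ⟨w, hw⟩ :=
      EternalAux.dist_le_induced hT (hconn j) v.2 hw
    exact le_trans h1 (le_trans (hv ⟨w, hw⟩) (hrad j))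
  choose u hu₁ hu₂ using hcent
  -- cop indexing
  let E : (Σ j, Fin (I j)) ≃ Fin (∑ j, I j) :=
    Fintype.equivFinOfCardEq (by simp)
  let κ : ∀ j : Fin p, Fin (I j) → Fin (∑ j, I j) := fun j m => E ⟨j, m⟩
  -- gates
  let y : Fin p → V → V := fun j r => EternalAux.gateTo P (W j) (u j) r
  have hy_mem : ∀ j r, y j r ∈ W j := fun j r =>
    EternalAux.gateTo_mem P hPp (hu₁ j) r
  have hy_self : ∀ j r, r ∈ W j → y j r = r := fun j r hr =>
    EternalAux.gateTo_of_mem P hr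
  have hy_step : ∀ j r r', (r' = r ∨ G.Adj r r') → (y j r' = y j r ∨ G.Adj (y j r) (y j r')) := by
    rintro j r r' (rfl | hadj)
    · exact Or.inl rfl
    · exact EternalAux.gateTo_step P hT hPp (hconn j) (hu₁ j) hadj
  have hy_move : ∀ j r r', (r' = r ∨ G.Adj r r') → G.dist (y j r) (y j r') ≤ 1 := by
    intro j r r' h
    rcases hy_step j r r' h with heq | hadj
    · rw [heq, SimpleGraph.dist_self]; omega
    · rw [SimpleGraph.dist_eq_one_iff_adj.mpr hadj]
  have hLt : ∀ j, ell t (I j) ≤ t := fun j => ell_le_self t (I j)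
  -- the invariant set
  set T : Set (Fin (∑ j, I j) → V) :=
    {c | ∀ j, (∀ m, c (κ j m) ∈ W j) ∧ ∃ m₀, ∀ m, m ≠ m₀ → c (κ j m) = u j} with hTdef
  have hκ : ∀ j m, κ j m = E ⟨j, m⟩ := fun _ _ => rfl
  -- main induction
  have MAIN : ∀ s, 1 ≤ s → s ≤ t → ∀ (c : Fin (∑ j, I j) → V) (r : V),
      (∃ (α : ∀ j, Fin (I j)) (a₀ : Fin p → V), ∀ j,
        (∀ m, c (κ j m) ∈ W j) ∧
        (∀ m, m ≠ α j → G.dist (c (κ j m)) (u j) ≤ ell t (I j) - (t - s)) ∧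
        a₀ j ∈ W j ∧ (∀ w ∈ W j, G.dist (a₀ j) w ≤ t) ∧
        (G.dist (c (κ j (α j))) (y j r) ≤ 1 ∨
          (G.dist (a₀ j) (c (κ j (α j))) = t - s ∧
           G.dist (a₀ j) (c (κ j (α j))) + G.dist (c (κ j (α j))) (y j r) =
             G.dist (a₀ j) (y j r)))) →
      Cap G T s c r := by
    intro s
    induction s with
    | zero => exact fun h => absurd h (by omega)
    | succ s ih =>
      intro _ hst c r hINV
      obtain ⟨α, a₀, hinv⟩ := hINV
      -- chase step for the active cop of each block
      have hstepA : ∀ j, ∃ x' : V, (x' = c (κ j (α j)) ∨ G.Adj (c (κ j (α j))) x') ∧ x' ∈ W j ∧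
          (G.dist (c (κ j (α j))) (y j r) ≤ 1 → x' = y j r) ∧
          (∀ r', (r' = r ∨ G.Adj r r') →
            (G.dist x' (y j r') ≤ 1 ∨
              (G.dist (a₀ j) x' = (t - (s+1)) + 1 ∧
               G.dist (a₀ j) x' + G.dist x' (y j r') = G.dist (a₀ j) (y j r')))) := by
        intro j
        by_cases hd : G.dist (c (κ j (α j))) (y j r) ≤ 1
        · refine ⟨y j r, ?_, hy_mem j r, fun _ => rfl, ?_⟩
          · rcases Nat.lt_or_ge (G.dist (c (κ j (α j))) (y j r)) 1 with h0 | h1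
            · left
              have := (hT.isConnected.dist_eq_zero_iff).mp (by omega :
                G.dist (c (κ j (α j))) (y j r) = 0)
              exact this.symm
            · right
              exact SimpleGraph.dist_eq_one_iff_adj.mp (by omega)
          · intro r' hr'
            exact Or.inl (hy_move j r r' hr')
        · have hact := (hinv j).2.2.2.2
          have hgeo : G.dist (a₀ j) (c (κ j (α j))) = t - (s+1) ∧
              G.dist (a₀ j) (c (κ j (α j))) + G.dist (c (κ j (α j))) (y j r) =
                G.dist (a₀ j) (y j r) := by
            rcases hact with h | h
            · exact absurd h hd
            · exact h
          obtain ⟨x', hadj, hplus, hall⟩ :=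
            EternalAux.chase_step hT hgeo.2 (by omega)
          have hbet : G.dist (a₀ j) x' + G.dist x' (y j r) = G.dist (a₀ j) (y j r) :=
            hall (y j r) (Or.inl rfl)
          refine ⟨x', Or.inr hadj, ?_, fun h => absurd h hd, ?_⟩
          · exact EternalAux.between_mem hT (hconn j) ((hinv j).2.2.1) (hy_mem j r) hbet
          · intro r' hr'
            right
            refine ⟨by omega, ?_⟩
            exact hall (y j r') (hy_step j r r' hr')
      -- homing step for the other cops
      have hstepH : ∀ j (m : Fin (I j)), ∃ z : V, (z = c (κ j m) ∨ G.Adj (c (κ j m)) z) ∧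
          z ∈ W j ∧ ((c (κ j m) = u j ∧ z = u j) ∨
            G.dist z (u j) + 1 = G.dist (c (κ j m)) (u j)) := by
        intro j m
        by_cases h0 : G.dist (c (κ j m)) (u j) = 0
        · have he : c (κ j m) = u j := (hT.isConnected.dist_eq_zero_iff).mp h0
          exact ⟨c (κ j m), Or.inl rfl, (hinv j).1 m, Or.inl ⟨he, he⟩⟩
        · obtain ⟨z, hadj, hz⟩ := EternalAux.step_toward hT.isConnected
            (x := c (κ j m)) (y := u j) (by omega)
          refine ⟨z, Or.inr hadj, ?_, Or.inr hz⟩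
          apply EternalAux.between_mem hT (hconn j) ((hinv j).1 m) (hu₁ j)
          have h1 : G.dist (c (κ j m)) z = 1 := SimpleGraph.dist_eq_one_iff_adj.mpr hadj
          omega
      choose A hA1 hA2 hA3 hA4 using hstepA
      choose H hH1 hH2 hH3 using hstepH
      -- the cops' move
      set c' : Fin (∑ j, I j) → V := fun i =>
        if (E.symm i).2 = α (E.symm i).1 then A (E.symm i).1 else H (E.symm i).1 (E.symm i).2
        with hc'def
      have hc'κ : ∀ j m, c' (κ j m) = if m = α j then A j else H j m := by
        intro j m
        rw [hc'def, hκ]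
        show (if (E.symm (E ⟨j, m⟩)).2 = α (E.symm (E ⟨j, m⟩)).1 then A (E.symm (E ⟨j, m⟩)).1
          else H (E.symm (E ⟨j, m⟩)).1 (E.symm (E ⟨j, m⟩)).2) = if m = α j then A j else H j m
        rw [Equiv.symm_apply_apply]
      have honestep : OneStepMove G c c' := by
        intro i
        have h1 : κ (E.symm i).1 (E.symm i).2 = i := by
          rw [hκ, Sigma.eta, E.apply_symm_apply]
        rw [← h1, hc'κ]
        by_cases hm : (E.symm i).2 = α (E.symm i).1
        · rw [if_pos hm, hm]
          exact hA1 (E.symm i).1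
        · rw [if_neg hm]
          exact hH1 (E.symm i).1 (E.symm i).2
      have hc'mem : ∀ j m, c' (κ j m) ∈ W j := by
        intro j m
        rw [hc'κ]
        by_cases hm : m = α j
        · rw [if_pos hm]; exact hA2 j
        · rw [if_neg hm]; exact hH2 j m
      rw [Cap]
      refine ⟨c', honestep, ?_⟩
      rcases Nat.eq_zero_or_pos s with hs0 | hs1
      · -- final round: capture
        subst hs0
        left
        obtain ⟨mj, hmj⟩ := hcover r
        have hdist1 : G.dist (c (κ mj (α mj))) (y mj r) ≤ 1 := by
          rcases (hinv mj).2.2.2.2 with h | h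
          · exact h
          · have hyb : G.dist (a₀ mj) (y mj r) ≤ t := (hinv mj).2.2.2.1 _ (hy_mem mj r)
            omega
        constructor
        · refine ⟨κ mj (α mj), ?_⟩
          rw [hc'κ, if_pos rfl, hA3 mj hdist1, hy_self mj r hmj]
        · -- c' ∈ T
          intro j
          refine ⟨hc'mem j, α j, ?_⟩
          intro m hm
          rw [hc'κ, if_neg hm]
          have hb := (hinv j).2.1 m hm
          have hLj := hLt j
          rcases hH3 j m with ⟨-, hzu⟩ | hzu
          · exact hzu
          · have : G.dist (H j m) (u j) = 0 := by omega
            exact (hT.isConnected.dist_eq_zero_iff).mp this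
      · -- continue the chase
        right
        intro r' hr'
        right
        apply ih (by omega) (by omega)
        refine ⟨α, a₀, ?_⟩
        intro j
        have hts : t - s = (t - (s+1)) + 1 := by omega
        refine ⟨hc'mem j, ?_, (hinv j).2.2.1, (hinv j).2.2.2.1, ?_⟩
        · intro m hm
          rw [hc'κ, if_neg hm]
          have hb := (hinv j).2.1 m hm
          rcases hH3 j m with ⟨-, hzu⟩ | hzu
          · rw [hzu, SimpleGraph.dist_self]; omega
          · omega
        · have hc'a : c' (κ j (α j)) = A j := by rw [hc'κ, if_pos rfl]
          rw [hc'a]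
          rcases hA4 j r' hr' with h | h
          · exact Or.inl h
          · right
            rw [hts]
            exact h
  -- initial configuration and conclusion
  refine ⟨T, ⟨fun i => u (E.symm i).1, ?_⟩, ?_⟩
  · intro j
    constructor
    · intro m
      rw [hκ]
      show u (E.symm (E ⟨j, m⟩)).1 ∈ W j
      rw [Equiv.symm_apply_apply]
      exact hu₁ j
    · refine ⟨⟨0, hI j⟩, fun m _ => ?_⟩
      rw [hκ]
      show u (E.symm (E ⟨j, m⟩)).1 = u j
      rw [Equiv.symm_apply_apply]
  · intro c hc r
    right
    have hc' : ∀ j, (∀ m, c (κ j m) ∈ W j) ∧ ∃ m₀, ∀ m, m ≠ m₀ → c (κ j m) = u j := hc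
    choose m₀ hm₀ using fun j => (hc' j).2
    have hcW : ∀ j m, c (κ j m) ∈ W j := fun j => (hc' j).1
    let α : ∀ j, Fin (I j) := fun j =>
      if h2 : 2 ≤ I j then
        (if m₀ j = ⟨0, hI j⟩ then ⟨1, h2⟩ else ⟨0, hI j⟩)
      else m₀ j
    have hα_eq : ∀ j, α j =
        if h2 : 2 ≤ I j then
          (if m₀ j = ⟨0, hI j⟩ then (⟨1, h2⟩ : Fin (I j)) else ⟨0, hI j⟩)
        else m₀ j := fun _ => rfl
    have hα : ∀ j, 2 ≤ I j → c (κ j (α j)) = u j := by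
      intro j h2
      apply hm₀ j
      rw [hα_eq, dif_pos h2]
      by_cases h0 : m₀ j = ⟨0, hI j⟩
      · rw [if_pos h0, h0]
        intro hcon
        have := congrArg Fin.val hcon
        simp at this
      · rw [if_neg h0]
        exact fun hcon => h0 hcon.symm
    let a₀ : Fin p → V := fun j => if 2 ≤ I j then u j else c (κ j (α j))
    have ha₀_eq : ∀ j, a₀ j = if 2 ≤ I j then u j else c (κ j (α j)) := fun _ => rfl
    apply MAIN t ht (le_refl t) c r
    refine ⟨α, a₀, ?_⟩
    intro j
    refine ⟨hcW j, ?_, ?_, ?_, ?_⟩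
    · intro m hm
      have h0 : t - t = 0 := Nat.sub_self t
      rw [h0, Nat.sub_zero]
      by_cases hmm : m = m₀ j
      · rw [SimpleGraph.dist_comm]
        exact hu₂ j _ (hcW j m)
      · rw [hm₀ j m hmm, SimpleGraph.dist_self]
        omega
    · rw [ha₀_eq]
      by_cases h2 : 2 ≤ I j
      · rw [if_pos h2]; exact hu₁ j
      · rw [if_neg h2]; exact hcW j (α j)
    · intro w hw
      rw [ha₀_eq]
      by_cases h2 : 2 ≤ I j
      · rw [if_pos h2]
        exact le_trans (hu₂ j w hw) (hLt j)
      · rw [if_neg h2]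
        have hI1 : I j = 1 := by have := hI j; omega
        have h3 : G.dist (c (κ j (α j))) w ≤
            G.dist (c (κ j (α j))) (u j) + G.dist (u j) w := hT.isConnected.dist_triangle
        have h4 : G.dist (c (κ j (α j))) (u j) ≤ ell t (I j) := by
          rw [SimpleGraph.dist_comm]
          exact hu₂ j _ (hcW j (α j))
        have h5 : G.dist (u j) w ≤ ell t (I j) := hu₂ j w hw
        have h6 : 2 * ell t 1 ≤ t := two_ell_one_le t
        rw [hI1] at h4 h5
        omega
    · right
      have hax : a₀ j = c (κ j (α j)) := by
        rw [ha₀_eq]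
        by_cases h2 : 2 ≤ I j
        · rw [if_pos h2]; exact (hα j h2).symm
        · rw [if_neg h2]
      rw [hax, SimpleGraph.dist_self]
      exact ⟨by omega, by omega⟩

/-- if a tree is partitioned into nonempty subtrees, the `j`-th of radius at
most `ℓ_{i_j}`, then `c_t^∞(T) ≤ Σ_j i_j`. -/
theorem eternalCopNumber_tree_le_sum {V : Type*} [Fintype V] (G : SimpleGraph V)
    (hT : G.IsTree) (t : ℕ) (ht : 1 ≤ t) (p : ℕ) (W : Fin p → Set V)
    (hne : ∀ j, (W j).Nonempty)
    (hdisj : ∀ j j', j ≠ j' → Disjoint (W j) (W j'))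
    (hcover : ∀ v, ∃ j, v ∈ W j)
    (hconn : ∀ j, (G.induce (W j)).Connected)
    (I : Fin p → ℕ) (hI : ∀ j, 1 ≤ I j)
    (hrad : ∀ j, graphRadius (G.induce (W j)) ≤ ell t (I j)) :
    eternalCopNumber G t ≤ ∑ j, I j := by
  classical
  show sInf {k | 1 ≤ k ∧ EternalWin G k t} ≤ ∑ j, I j
  rcases Nat.eq_zero_or_pos p with hp | hp
  · subst hp
    have hVempty : IsEmpty V := ⟨fun v => by obtain ⟨j, _⟩ := hcover v; exact j.elim0⟩
    have hempty : {k | 1 ≤ k ∧ EternalWin G k t} = ∅ := by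
      ext k
      simp only [Set.mem_setOf_eq, Set.mem_empty_iff_false, iff_false, not_and]
      rintro hk ⟨T', hT'ne, -⟩
      obtain ⟨c, -⟩ := hT'ne
      exact hVempty.false (c ⟨0, hk⟩)
    rw [hempty, Nat.sInf_empty]
    exact Nat.zero_le _
  · refine Nat.sInf_le ⟨?_, main_win hT t ht W hne hcover hconn I hI hrad⟩
    have : 0 < ∑ j, I j := Finset.sum_pos (fun j _ => hI j) ⟨⟨0, hp⟩, Finset.mem_univ _⟩
    omega
end
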